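/- arXiv:2510.07759 — 9 statements merged into one kernel-verified Lean document; each statement's English description precedes it below -/
import Mathlib

section
/- Let a ≤ b be real numbers and δ > 0. For all μ, ν in the box {μ ∈ ℝ^m : a ≤ μ_j ≤ b for all j}, one has ‖∇F_δ(μ) − ∇F_δ(ν)‖₂ ≤ L·‖μ − ν‖₂ with L = exp(b) + ‖B‖₁/δ; that is, F_δ is L-smooth on the box (in the paper, a = μ̲ − η and b = μ̄ + η). -/
open scoped Classical

noncomputable section

/-- Extended valuation vector of buyer `i`: index `0` gets value `1` (the convention
`v_{i0} = 1`), index `j+1` gets `v i j`. -/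
def extV {n m : ℕ} (v : Fin n → Fin m → ℝ) (i : Fin n) : Fin (m + 1) → ℝ :=
  Fin.cons 1 (v i)

/-- Extended log-price vector: index `0` gets `0` (the convention `μ₀ = 0`),
index `j+1` gets `μ j`. -/
def extMu {m : ℕ} (μ : Fin m → ℝ) : Fin (m + 1) → ℝ :=
  Fin.cons 0 μ

/-- The smoothed weight `exp((log v_{ij} − μ_j)/δ) = v_{ij}^{1/δ} · exp(−μ_j/δ)`,
with the conventions `log 0 = −∞`, `exp (−∞) = 0` (via `0 ^ (1/δ) = 0` for `δ > 0`). -/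
def wt {n m : ℕ} (v : Fin n → Fin m → ℝ) (δ : ℝ) (μ : Fin m → ℝ) (i : Fin n)
    (j : Fin (m + 1)) : ℝ :=
  extV v i j ^ (1 / δ) * Real.exp (-extMu μ j / δ)

/-- The smoothed objective `F_δ`. -/
def Fd {n m : ℕ} (B : Fin n → ℝ) (v : Fin n → Fin m → ℝ) (δ : ℝ) (μ : Fin m → ℝ) : ℝ :=
  (∑ j, Real.exp (μ j)) + δ * ∑ i, B i * Real.log (∑ j, wt v δ μ i j)

/-- The gradient of the smoothed objective `F_δ`. -/
def gradFd {n m : ℕ} (B : Fin n → ℝ) (v : Fin n → Fin m → ℝ) (δ : ℝ) (μ : Fin m → ℝ)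
    (j : Fin m) : ℝ :=
  Real.exp (μ j) - ∑ i, B i * (wt v δ μ i j.succ / ∑ j', wt v δ μ i j')

/-- The value `v_{ij} · exp(−μ_j)` (over extended indices), whose logarithm is
`log v_{ij} − μ_j` with the convention `log 0 = −∞`. -/
def valF {n m : ℕ} (v : Fin n → Fin m → ℝ) (μ : Fin m → ℝ) (i : Fin n) (j : Fin (m + 1)) : ℝ :=
  extV v i j * Real.exp (-extMu μ j)

/-- `h_i(μ) = max_{j ∈ {0,…,m}} (log v_{ij} − μ_j)`, realized as the logarithm of the
(positive) maximum of the values `v_{ij} e^{−μ_j}`. -/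
def hMax {n m : ℕ} (v : Fin n → Fin m → ℝ) (μ : Fin m → ℝ) (i : Fin n) : ℝ :=
  Real.log (Finset.univ.sup' Finset.univ_nonempty (valF v μ i))

/-- The nonsmooth objective `F`. -/
def Fobj {n m : ℕ} (B : Fin n → ℝ) (v : Fin n → Fin m → ℝ) (μ : Fin m → ℝ) : ℝ :=
  (∑ j, Real.exp (μ j)) + ∑ i, B i * hMax v μ i

/-- The active index set `𝒥_i(μ) = {j ∈ {0,…,m} : log v_{ij} − μ_j = h_i(μ)}`. -/
def activeSet {n m : ℕ} (v : Fin n → Fin m → ℝ) (μ : Fin m → ℝ) (i : Fin n) :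
    Finset (Fin (m + 1)) :=
  Finset.univ.filter fun j =>
    valF v μ i j = Finset.univ.sup' Finset.univ_nonempty (valF v μ i)

/-- The Euclidean norm on `ℝ^m`. -/
def enorm2 {m : ℕ} (x : Fin m → ℝ) : ℝ :=
  Real.sqrt (∑ j, x j ^ 2)

end

section AuxSmooth

/-- Jensen-type inequality: `(∑ w z)² ≤ ∑ w z²` when `w ≥ 0`, `∑ w = 1`. -/
lemma jensen_sq {M : ℕ} (w z : Fin M → ℝ) (hw : ∀ k, 0 ≤ w k) (hs : ∑ k, w k = 1) :
    (∑ k, w k * z k) ^ 2 ≤ ∑ k, w k * z k ^ 2 := by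
  have h := Finset.sum_mul_sq_le_sq_mul_sq Finset.univ (fun k => Real.sqrt (w k))
    (fun k => Real.sqrt (w k) * z k)
  have e1 : ∀ k : Fin M, Real.sqrt (w k) * (Real.sqrt (w k) * z k) = w k * z k := by
    intro k
    rw [← mul_assoc, Real.mul_self_sqrt (hw k)]
  have e2 : ∀ k : Fin M, Real.sqrt (w k) ^ 2 = w k := fun k => Real.sq_sqrt (hw k)
  have e3 : ∀ k : Fin M, (Real.sqrt (w k) * z k) ^ 2 = w k * z k ^ 2 := by
    intro k
    rw [mul_pow, e2]
  simp only [e1, e2, e3, hs, one_mul] at h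
  exact h

/-- Weighted Cauchy–Schwarz covariance bound. -/
lemma weighted_cs {M : ℕ} (w x y : Fin M → ℝ) (hw : ∀ k, 0 ≤ w k) (hs : ∑ k, w k = 1) :
    |(∑ k, w k * x k * y k) - (∑ k, w k * x k) * (∑ k, w k * y k)| ≤
      Real.sqrt (∑ k, x k ^ 2) * Real.sqrt (∑ k, y k ^ 2) := by
  set P := Real.sqrt (∑ k, x k ^ 2) with hP
  set Q := Real.sqrt (∑ k, y k ^ 2) with hQ
  have hP0 : 0 ≤ P := Real.sqrt_nonneg _
  have hQ0 : 0 ≤ Q := Real.sqrt_nonneg _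
  have hPsq : P ^ 2 = ∑ k, x k ^ 2 := Real.sq_sqrt (Finset.sum_nonneg fun k _ => sq_nonneg _)
  have hQsq : Q ^ 2 = ∑ k, y k ^ 2 := Real.sq_sqrt (Finset.sum_nonneg fun k _ => sq_nonneg _)
  have hw1 : ∀ k, w k ≤ 1 := by
    intro k
    calc w k ≤ ∑ k', w k' := Finset.single_le_sum (fun k' _ => hw k') (Finset.mem_univ k)
    _ = 1 := hs
  have hvar : ∀ z : Fin M → ℝ, (∑ k, w k * z k) ^ 2 ≤ ∑ k, w k * z k ^ 2 :=
    fun z => jensen_sq w z hw hs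
  have hub : ∀ z : Fin M → ℝ, (∑ k, w k * z k ^ 2) ≤ ∑ k, z k ^ 2 := by
    intro z
    apply Finset.sum_le_sum
    intro k _
    nlinarith [sq_nonneg (z k), hw1 k, hw k]
  have expand : ∀ s : ℝ, (∑ k, w k * (Q * x k + s * (P * y k)) ^ 2)
      = Q^2 * (∑ k, w k * x k ^2) + 2 * Q * s * P * (∑ k, w k * x k * y k)
        + s^2 * P^2 * (∑ k, w k * y k ^ 2) := by
    intro s
    rw [Finset.mul_sum, Finset.mul_sum, Finset.mul_sum, ← Finset.sum_add_distrib,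
      ← Finset.sum_add_distrib]
    apply Finset.sum_congr rfl
    intro k _
    ring
  have expand2 : ∀ s : ℝ, (∑ k, w k * (Q * x k + s * (P * y k)))
      = Q * (∑ k, w k * x k) + s * P * (∑ k, w k * y k) := by
    intro s
    rw [Finset.mul_sum, Finset.mul_sum, ← Finset.sum_add_distrib]
    apply Finset.sum_congr rfl
    intro k _
    ring
  by_cases hPz : (∑ k, x k ^ 2) = 0
  · have hx : ∀ k, x k = 0 := by
      intro k
      have := (Finset.sum_eq_zero_iff_of_nonneg (fun k _ => sq_nonneg (x k))).mp hPz k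
        (Finset.mem_univ k)
      exact pow_eq_zero_iff (n := 2) (by norm_num) |>.mp this
    simp [hx]
    positivity
  by_cases hQz : (∑ k, y k ^ 2) = 0
  · have hy : ∀ k, y k = 0 := by
      intro k
      have := (Finset.sum_eq_zero_iff_of_nonneg (fun k _ => sq_nonneg (y k))).mp hQz k
        (Finset.mem_univ k)
      exact pow_eq_zero_iff (n := 2) (by norm_num) |>.mp this
    simp [hy]
    positivity
  have hPpos : 0 < P := Real.sqrt_pos.mpr
    (lt_of_le_of_ne (Finset.sum_nonneg fun k _ => sq_nonneg _) (Ne.symm hPz))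
  have hQpos : 0 < Q := Real.sqrt_pos.mpr
    (lt_of_le_of_ne (Finset.sum_nonneg fun k _ => sq_nonneg _) (Ne.symm hQz))
  have key : ∀ s : ℝ, s = 1 ∨ s = -1 →
      0 ≤ (∑ k, w k * (Q * x k + s * (P * y k)) ^ 2)
        - (∑ k, w k * (Q * x k + s * (P * y k))) ^ 2 := by
    intro s _
    have := hvar (fun k => Q * x k + s * (P * y k))
    linarith
  have h1 := key 1 (Or.inl rfl)
  have h2 := key (-1) (Or.inr rfl)
  rw [expand 1, expand2 1] at h1
  rw [expand (-1), expand2 (-1)] at h2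
  have hAx : (∑ k, w k * x k ^ 2) ≤ P^2 := by rw [hPsq]; exact hub x
  have hAy : (∑ k, w k * y k ^ 2) ≤ Q^2 := by rw [hQsq]; exact hub y
  have hvx := hvar x
  have hvy := hvar y
  rw [abs_le]
  constructor
  · nlinarith [sq_nonneg (Q * (∑ k, w k * x k) - P * (∑ k, w k * y k)), mul_pos hPpos hQpos]
  · nlinarith [sq_nonneg (Q * (∑ k, w k * x k) + P * (∑ k, w k * y k)), mul_pos hPpos hQpos]

/-- The line segment from `ν` (at `t = 0`) to `μ` (at `t = 1`). -/
def lineSeg {m : ℕ} (μ ν : Fin m → ℝ) (t : ℝ) : Fin m → ℝ := fun j => ν j + t * (μ j - ν j)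

lemma lineSeg_zero {m : ℕ} (μ ν : Fin m → ℝ) : lineSeg μ ν 0 = ν := by
  funext j; simp [lineSeg]

lemma lineSeg_one {m : ℕ} (μ ν : Fin m → ℝ) : lineSeg μ ν 1 = μ := by
  funext j; simp [lineSeg]

lemma extMu_lineSeg {m : ℕ} (μ ν : Fin m → ℝ) (t : ℝ) (k : Fin (m + 1)) :
    extMu (lineSeg μ ν t) k = extMu ν k + t * (extMu μ k - extMu ν k) := by
  refine Fin.cases ?_ (fun j => ?_) k
  · simp [extMu]
  · simp [extMu, lineSeg]

lemma extV_nonneg {n m : ℕ} (v : Fin n → Fin m → ℝ) (hv : ∀ i j, 0 ≤ v i j)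
    (i : Fin n) (k : Fin (m + 1)) : 0 ≤ extV v i k := by
  refine Fin.cases ?_ (fun j => ?_) k
  · norm_num [extV]
  · simpa [extV] using hv i j

lemma wt_nonneg {n m : ℕ} (v : Fin n → Fin m → ℝ) (hv : ∀ i j, 0 ≤ v i j)
    (δ : ℝ) (p : Fin m → ℝ) (i : Fin n) (k : Fin (m + 1)) : 0 ≤ wt v δ p i k :=
  mul_nonneg (Real.rpow_nonneg (extV_nonneg v hv i k) _) (Real.exp_nonneg _)

lemma sum_wt_pos {n m : ℕ} (v : Fin n → Fin m → ℝ) (hv : ∀ i j, 0 ≤ v i j)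
    (δ : ℝ) (p : Fin m → ℝ) (i : Fin n) : 0 < ∑ k, wt v δ p i k := by
  refine Finset.sum_pos' (fun k _ => wt_nonneg v hv δ p i k) ⟨0, Finset.mem_univ _, ?_⟩
  have h0 : extV v i 0 = 1 := by simp [extV]
  simp only [wt, h0, Real.one_rpow, one_mul]
  exact Real.exp_pos _

lemma wt_lineSeg_hasDerivAt {n m : ℕ} (v : Fin n → Fin m → ℝ) (δ : ℝ)
    (μ ν : Fin m → ℝ) (i : Fin n) (k : Fin (m + 1)) (t : ℝ) :
    HasDerivAt (fun s => wt v δ (lineSeg μ ν s) i k)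
      (wt v δ (lineSeg μ ν t) i k * (-(extMu μ k - extMu ν k) / δ)) t := by
  have heq : ∀ s, wt v δ (lineSeg μ ν s) i k
      = extV v i k ^ (1 / δ) *
          Real.exp (-(extMu ν k + s * (extMu μ k - extMu ν k)) / δ) := by
    intro s; rw [wt, extMu_lineSeg]
  have h1 : HasDerivAt (fun s : ℝ => -(extMu ν k + s * (extMu μ k - extMu ν k)) / δ)
      (-(extMu μ k - extMu ν k) / δ) t := by
    simpa using (((hasDerivAt_mul_const (extMu μ k - extMu ν k)).const_add
      (extMu ν k)).neg).div_const δ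
  have h2 := (h1.exp).const_mul (extV v i k ^ (1 / δ))
  have h3 : (fun s => wt v δ (lineSeg μ ν s) i k)
      = fun s => extV v i k ^ (1 / δ) *
          Real.exp (-(extMu ν k + s * (extMu μ k - extMu ν k)) / δ) := funext heq
  rw [h3]
  refine h2.congr_deriv ?_
  rw [heq t]; ring

lemma gradFd_lineSeg_hasDerivAt {n m : ℕ} (B : Fin n → ℝ) (v : Fin n → Fin m → ℝ)
    (hv : ∀ i j, 0 ≤ v i j) (δ : ℝ) (μ ν : Fin m → ℝ) (j : Fin m) (t : ℝ) :
    HasDerivAt (fun s => gradFd B v δ (lineSeg μ ν s) j)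
      (Real.exp (lineSeg μ ν t j) * (μ j - ν j)
        - ∑ i, B i *
          ((wt v δ (lineSeg μ ν t) i j.succ * (-(extMu μ j.succ - extMu ν j.succ) / δ)
              * (∑ k, wt v δ (lineSeg μ ν t) i k)
            - wt v δ (lineSeg μ ν t) i j.succ
              * (∑ k, wt v δ (lineSeg μ ν t) i k * (-(extMu μ k - extMu ν k) / δ)))
          / (∑ k, wt v δ (lineSeg μ ν t) i k) ^ 2)) t := by
  have hexp : HasDerivAt (fun s => Real.exp (lineSeg μ ν s j))
      (Real.exp (lineSeg μ ν t j) * (μ j - ν j)) t := by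
    have h : HasDerivAt (fun s : ℝ => ν j + s * (μ j - ν j)) (μ j - ν j) t := by
      simpa using (hasDerivAt_mul_const (μ j - ν j)).const_add (ν j)
    exact h.exp
  have hsum : HasDerivAt (fun s => ∑ i, B i *
      (wt v δ (lineSeg μ ν s) i j.succ / ∑ k, wt v δ (lineSeg μ ν s) i k))
      (∑ i, B i *
        ((wt v δ (lineSeg μ ν t) i j.succ * (-(extMu μ j.succ - extMu ν j.succ) / δ)
            * (∑ k, wt v δ (lineSeg μ ν t) i k)
          - wt v δ (lineSeg μ ν t) i j.succ
            * (∑ k, wt v δ (lineSeg μ ν t) i k * (-(extMu μ k - extMu ν k) / δ)))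
        / (∑ k, wt v δ (lineSeg μ ν t) i k) ^ 2)) t := by
    refine HasDerivAt.fun_sum (fun i _ => ?_)
    refine HasDerivAt.const_mul (B i) ?_
    refine HasDerivAt.div (wt_lineSeg_hasDerivAt v δ μ ν i j.succ t)
      (HasDerivAt.fun_sum (fun k _ => wt_lineSeg_hasDerivAt v δ μ ν i k t))
      (ne_of_gt (sum_wt_pos v hv δ _ i))
  exact hexp.sub hsum

/-- Per-buyer softmax derivative bound. -/
lemma per_buyer_bound {m : ℕ} (W : Fin (m + 1) → ℝ) (hW : ∀ k, 0 ≤ W k)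
    (hWpos : 0 < ∑ k, W k) (u d : Fin m → ℝ) (D : Fin (m + 1) → ℝ)
    (hD0 : D 0 = 0) (hDs : ∀ j : Fin m, D j.succ = d j) (δ : ℝ) (hδ : 0 < δ) :
    |∑ j : Fin m, u j * ((W j.succ * (-(D j.succ) / δ) * (∑ k, W k)
        - W j.succ * (∑ k, W k * (-(D k) / δ))) / (∑ k, W k) ^ 2)|
      ≤ (1 / δ) * (Real.sqrt (∑ j, u j ^ 2) * Real.sqrt (∑ j, d j ^ 2)) := by
  have hS : (∑ k, W k) ≠ 0 := ne_of_gt hWpos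
  have hδ' : δ ≠ 0 := ne_of_gt hδ
  set S : ℝ := ∑ k, W k with hS_def
  set w : Fin (m + 1) → ℝ := fun k => W k / S with hw_def
  have hwnn : ∀ k, 0 ≤ w k := fun k => div_nonneg (hW k) (le_of_lt hWpos)
  have hwsum : ∑ k, w k = 1 := by
    rw [hw_def, ← Finset.sum_div, ← hS_def, div_self hS]
  set C : ℝ := ∑ k, w k * D k with hC_def
  have hterm : ∀ j : Fin m,
      (W j.succ * (-(D j.succ) / δ) * S - W j.succ * (∑ k, W k * (-(D k) / δ))) / S ^ 2
        = (1 / δ) * (w j.succ * (C - D j.succ)) := by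
    intro j
    have h1 : (∑ k, W k * (-(D k) / δ)) = -(∑ k, W k * D k) / δ := by
      rw [Finset.sum_congr rfl (fun k _ =>
        show W k * (-(D k) / δ) = -(W k * D k) / δ by ring), ← Finset.sum_div,
        Finset.sum_neg_distrib]
    have h2 : C = (∑ k, W k * D k) / S := by
      rw [hC_def, Finset.sum_div]
      exact Finset.sum_congr rfl (fun k _ => by rw [hw_def]; ring)
    rw [h1, h2, hw_def]
    field_simp
    ring
  calc |∑ j : Fin m, u j * ((W j.succ * (-(D j.succ) / δ) * S
          - W j.succ * (∑ k, W k * (-(D k) / δ))) / S ^ 2)|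
      = |(1 / δ) * ∑ j : Fin m, u j * (w j.succ * (C - D j.succ))| := by
        rw [Finset.mul_sum]
        congr 1
        exact Finset.sum_congr rfl (fun j _ => by rw [hterm j]; ring)
    _ = (1 / δ) * |∑ j : Fin m, u j * (w j.succ * (C - D j.succ))| := by
        rw [abs_mul, abs_of_nonneg (by positivity : (0:ℝ) ≤ 1 / δ)]
    _ ≤ (1 / δ) * (Real.sqrt (∑ j, u j ^ 2) * Real.sqrt (∑ j, d j ^ 2)) := by
        have hkey : |∑ j : Fin m, u j * (w j.succ * (C - D j.succ))|
            ≤ Real.sqrt (∑ j, u j ^ 2) * Real.sqrt (∑ j, d j ^ 2) := by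
          set U : Fin (m + 1) → ℝ := Fin.cons 0 u with hU_def
          have hrw : ∑ j : Fin m, u j * (w j.succ * (C - D j.succ))
              = (∑ k, w k * U k) * (∑ k, w k * D k) - (∑ k, w k * U k * D k) := by
            have e1 : ∑ k, w k * U k * (C - D k)
                = (∑ k, w k * U k) * C - (∑ k, w k * U k * D k) := by
              rw [Finset.sum_mul, ← Finset.sum_sub_distrib]
              exact Finset.sum_congr rfl (fun k _ => by ring)
            have e2 : ∑ k, w k * U k * (C - D k)
                = ∑ j : Fin m, u j * (w j.succ * (C - D j.succ)) := by
              rw [Fin.sum_univ_succ]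
              simp only [hU_def, Fin.cons_zero, Fin.cons_succ, mul_zero, zero_mul,
                mul_comm, zero_add]
              exact Finset.sum_congr rfl (fun j _ => by ring)
            rw [← e2, e1, hC_def]
          have hsumU : (∑ k, U k ^ 2) = ∑ j, u j ^ 2 := by
            rw [Fin.sum_univ_succ]
            simp [hU_def]
          have hsumD : (∑ k, D k ^ 2) = ∑ j, d j ^ 2 := by
            rw [Fin.sum_univ_succ, hD0]
            simp [hDs]
          rw [hrw, ← hsumU, ← hsumD, abs_sub_comm]
          exact weighted_cs w U D hwnn hwsum
        have h0 : (0:ℝ) ≤ 1 / δ := by positivity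
        exact mul_le_mul_of_nonneg_left hkey h0

end AuxSmooth

/-- `F_δ` is `L`-smooth on the box `[a,b]^m`, with
`L = exp b + ‖B‖₁/δ`. -/
theorem fdelta_smooth_on_box
    (n m : ℕ) (hn : 1 ≤ n) (hm : 1 ≤ m)
    (B : Fin n → ℝ) (hB : ∀ i, 0 < B i)
    (v : Fin n → Fin m → ℝ) (hv : ∀ i j, 0 ≤ v i j)
    (a b : ℝ) (hab : a ≤ b) (δ : ℝ) (hδ : 0 < δ)
    (μ ν : Fin m → ℝ)
    (hμ : ∀ j, a ≤ μ j ∧ μ j ≤ b) (hν : ∀ j, a ≤ ν j ∧ ν j ≤ b) :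
    enorm2 (fun j => gradFd B v δ μ j - gradFd B v δ ν j) ≤
      (Real.exp b + (∑ i, B i) / δ) * enorm2 (fun j => μ j - ν j) := by
  classical
  have hδ' : δ ≠ 0 := ne_of_gt hδ
  have hBsum : (0:ℝ) ≤ ∑ i, B i := Finset.sum_nonneg fun i _ => (hB i).le
  set u : Fin m → ℝ := fun j => gradFd B v δ μ j - gradFd B v δ ν j with hu_def
  simp only [enorm2]
  set P : ℝ := Real.sqrt (∑ j, u j ^ 2) with hP_def
  set Q : ℝ := Real.sqrt (∑ j, (μ j - ν j) ^ 2) with hQ_def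
  set L : ℝ := Real.exp b + (∑ i, B i) / δ with hL_def
  have hP0 : 0 ≤ P := Real.sqrt_nonneg _
  have hQ0 : 0 ≤ Q := Real.sqrt_nonneg _
  have hL0 : 0 ≤ L := by rw [hL_def]; positivity
  -- the function Φ and its derivative Φ'
  set Φ : ℝ → ℝ := fun t => ∑ j, u j * gradFd B v δ (lineSeg μ ν t) j with hΦ_def
  set Φ' : ℝ → ℝ := fun t => ∑ j, u j *
      (Real.exp (lineSeg μ ν t j) * (μ j - ν j)
        - ∑ i, B i *
          ((wt v δ (lineSeg μ ν t) i j.succ * (-(extMu μ j.succ - extMu ν j.succ) / δ)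
              * (∑ k, wt v δ (lineSeg μ ν t) i k)
            - wt v δ (lineSeg μ ν t) i j.succ
              * (∑ k, wt v δ (lineSeg μ ν t) i k * (-(extMu μ k - extMu ν k) / δ)))
          / (∑ k, wt v δ (lineSeg μ ν t) i k) ^ 2)) with hΦ'_def
  have hΦd : ∀ t, HasDerivAt Φ (Φ' t) t := by
    intro t
    rw [hΦ_def, hΦ'_def]
    exact HasDerivAt.fun_sum
      (fun j _ => (gradFd_lineSeg_hasDerivAt B v hv δ μ ν j t).const_mul (u j))
  have hcont : ContinuousOn Φ (Set.Icc 0 1) :=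
    fun x _ => ((hΦd x).continuousAt).continuousWithinAt
  obtain ⟨c, hc, hc_eq⟩ := exists_hasDerivAt_eq_slope Φ Φ' zero_lt_one hcont
    (fun x _ => hΦd x)
  have hΦ1 : Φ 1 = ∑ j, u j * gradFd B v δ μ j := by rw [hΦ_def]; simp [lineSeg_one]
  have hΦ0 : Φ 0 = ∑ j, u j * gradFd B v δ ν j := by rw [hΦ_def]; simp [lineSeg_zero]
  have hdiff : Φ 1 - Φ 0 = Φ' c := by rw [hc_eq]; norm_num
  have hsq : (∑ j, u j ^ 2) = Φ' c := by
    rw [← hdiff, hΦ1, hΦ0, ← Finset.sum_sub_distrib]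
    refine Finset.sum_congr rfl (fun j _ => ?_)
    simp only [hu_def]
    ring
  -- bound the exponential factor on the segment
  have hγb : ∀ j, lineSeg μ ν c j ≤ b := by
    intro j
    simp only [lineSeg]
    nlinarith [(hμ j).2, (hν j).2, hc.1.le, hc.2.le]
  -- rearrange Φ' c
  have hΦ'c : Φ' c = (∑ j, u j * (Real.exp (lineSeg μ ν c j) * (μ j - ν j)))
      - ∑ i, B i * (∑ j : Fin m, u j *
          ((wt v δ (lineSeg μ ν c) i j.succ * (-(extMu μ j.succ - extMu ν j.succ) / δ)
              * (∑ k, wt v δ (lineSeg μ ν c) i k)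
            - wt v δ (lineSeg μ ν c) i j.succ
              * (∑ k, wt v δ (lineSeg μ ν c) i k * (-(extMu μ k - extMu ν k) / δ)))
          / (∑ k, wt v δ (lineSeg μ ν c) i k) ^ 2)) := by
    rw [hΦ'_def]
    simp only [mul_sub, Finset.mul_sum, Finset.sum_sub_distrib]
    congr 1
    rw [Finset.sum_comm]
    refine Finset.sum_congr rfl (fun i _ => ?_)
    exact Finset.sum_congr rfl (fun j _ => by ring)
  -- bound the exponential part
  have hCS : (∑ j, |u j| * |μ j - ν j|) ≤ P * Q := by
    have h := Finset.sum_mul_sq_le_sq_mul_sq Finset.univ (fun j => |u j|)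
      (fun j => |μ j - ν j|)
    simp only [sq_abs] at h
    have h4 : 0 ≤ ∑ j, |u j| * |μ j - ν j| :=
      Finset.sum_nonneg fun j _ => mul_nonneg (abs_nonneg _) (abs_nonneg _)
    calc (∑ j, |u j| * |μ j - ν j|)
        = Real.sqrt ((∑ j, |u j| * |μ j - ν j|) ^ 2) := (Real.sqrt_sq h4).symm
      _ ≤ Real.sqrt ((∑ j, u j ^ 2) * (∑ j, (μ j - ν j) ^ 2)) := Real.sqrt_le_sqrt h
      _ = P * Q := Real.sqrt_mul (Finset.sum_nonneg fun j _ => sq_nonneg _) _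
  have hE : |∑ j, u j * (Real.exp (lineSeg μ ν c j) * (μ j - ν j))|
      ≤ Real.exp b * (P * Q) := by
    calc |∑ j, u j * (Real.exp (lineSeg μ ν c j) * (μ j - ν j))|
        ≤ ∑ j, |u j * (Real.exp (lineSeg μ ν c j) * (μ j - ν j))| :=
          Finset.abs_sum_le_sum_abs _ _
      _ ≤ ∑ j, Real.exp b * (|u j| * |μ j - ν j|) := by
          refine Finset.sum_le_sum (fun j _ => ?_)
          rw [abs_mul, abs_mul, abs_of_pos (Real.exp_pos _)]
          have h1 : Real.exp (lineSeg μ ν c j) ≤ Real.exp b :=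
            Real.exp_le_exp.mpr (hγb j)
          calc |u j| * (Real.exp (lineSeg μ ν c j) * |μ j - ν j|)
              ≤ |u j| * (Real.exp b * |μ j - ν j|) :=
                mul_le_mul_of_nonneg_left
                  (mul_le_mul_of_nonneg_right h1 (abs_nonneg _)) (abs_nonneg _)
            _ = Real.exp b * (|u j| * |μ j - ν j|) := by ring
      _ = Real.exp b * ∑ j, |u j| * |μ j - ν j| := (Finset.mul_sum _ _ _).symm
      _ ≤ Real.exp b * (P * Q) :=
          mul_le_mul_of_nonneg_left hCS (Real.exp_pos b).le
  -- bound the softmax part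
  have hT : ∀ i, |∑ j : Fin m, u j *
      ((wt v δ (lineSeg μ ν c) i j.succ * (-(extMu μ j.succ - extMu ν j.succ) / δ)
          * (∑ k, wt v δ (lineSeg μ ν c) i k)
        - wt v δ (lineSeg μ ν c) i j.succ
          * (∑ k, wt v δ (lineSeg μ ν c) i k * (-(extMu μ k - extMu ν k) / δ)))
      / (∑ k, wt v δ (lineSeg μ ν c) i k) ^ 2)| ≤ (1 / δ) * (P * Q) := by
    intro i
    have := per_buyer_bound (wt v δ (lineSeg μ ν c) i)
      (fun k => wt_nonneg v hv δ _ i k) (sum_wt_pos v hv δ _ i)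
      u (fun j => μ j - ν j) (fun k => extMu μ k - extMu ν k)
      (by simp [extMu]) (fun j => by simp [extMu]) δ hδ
    simpa using this
  have habs : |Φ' c| ≤ Real.exp b * (P * Q) + (∑ i, B i) * ((1 / δ) * (P * Q)) := by
    rw [hΦ'c]
    refine le_trans (abs_sub _ _) (add_le_add hE ?_)
    calc |∑ i, B i * (∑ j : Fin m, u j *
          ((wt v δ (lineSeg μ ν c) i j.succ * (-(extMu μ j.succ - extMu ν j.succ) / δ)
              * (∑ k, wt v δ (lineSeg μ ν c) i k)
            - wt v δ (lineSeg μ ν c) i j.succ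
              * (∑ k, wt v δ (lineSeg μ ν c) i k * (-(extMu μ k - extMu ν k) / δ)))
          / (∑ k, wt v δ (lineSeg μ ν c) i k) ^ 2))|
        ≤ ∑ i, |B i * (∑ j : Fin m, u j *
          ((wt v δ (lineSeg μ ν c) i j.succ * (-(extMu μ j.succ - extMu ν j.succ) / δ)
              * (∑ k, wt v δ (lineSeg μ ν c) i k)
            - wt v δ (lineSeg μ ν c) i j.succ
              * (∑ k, wt v δ (lineSeg μ ν c) i k * (-(extMu μ k - extMu ν k) / δ)))
          / (∑ k, wt v δ (lineSeg μ ν c) i k) ^ 2))| := Finset.abs_sum_le_sum_abs _ _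
      _ ≤ ∑ i, B i * ((1 / δ) * (P * Q)) := by
          refine Finset.sum_le_sum (fun i _ => ?_)
          rw [abs_mul, abs_of_pos (hB i)]
          exact mul_le_mul_of_nonneg_left (hT i) (hB i).le
      _ = (∑ i, B i) * ((1 / δ) * (P * Q)) := (Finset.sum_mul _ _ _).symm
  -- conclude
  have hP2 : P ^ 2 = ∑ j, u j ^ 2 :=
    Real.sq_sqrt (Finset.sum_nonneg fun j _ => sq_nonneg _)
  have hfinal : P ^ 2 ≤ L * Q * P := by
    have h1 : P ^ 2 ≤ |Φ' c| := by
      rw [hP2, hsq]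
      exact le_abs_self _
    have h2 : Real.exp b * (P * Q) + (∑ i, B i) * ((1 / δ) * (P * Q)) = L * Q * P := by
      rw [hL_def]
      field_simp
    calc P ^ 2 ≤ |Φ' c| := h1
      _ ≤ _ := habs
      _ = L * Q * P := h2
  by_cases hPz : P = 0
  · rw [hPz]
    positivity
  · have hPpos : 0 < P := lt_of_le_of_ne hP0 (Ne.symm hPz)
    nlinarith [hfinal, hPpos]
end

section
/- Suppose v has no zero row and no zero column. If (p*, x*) is a competitive equilibrium of the Fisher market with quasi-linear utilities u_i(x) = Σ_{j=1}^m (v_{ij} − p*_j)x_j, then for every good j one has min_{j'∈[m]} max_{i∈[n]} ( v_{ij'}·B_i / (Σ_{j''=1}^m v_{ij''} + B_i) ) ≤ p*_j ≤ max_{i∈[n], j'∈[m]} v_{ij'}. -/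
open scoped Classical

/-!
Every bound comes from one-good deviations of a single buyer. Spending the whole budget `B_i` on
a good `j'` with `p_{j'} > 0` yields utility `(v_{ij'} - p_{j'}) B_i / p_{j'}`, which cannot
exceed the equilibrium utility `≤ Σ_{j''} v_{ij''}` (bundles are at most one unit per good);
a free good must be worthless to everyone. Hence `v_{ij'} B_i ≤ p_{j'} (Σ_{j''} v_{ij''} + B_i)`
for all `i, j'`, so the bound at the cheapest good lies below every price. Conversely, a priced
good is sold in full, so some buyer holds part of it; dropping that part must not help, so
`p_j ≤ v_{ij}`.
-/

open Finset

section Buyer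

variable {κ : Type*} [Fintype κ]

def quasilinearUtility (p w y : κ → ℝ) : ℝ :=
  ∑ j, (w j - p j) * y j

def MaximizesQuasilinearUtility (p w : κ → ℝ) (b : ℝ) (z : κ → ℝ) : Prop :=
  ∀ y : κ → ℝ, (∀ j, 0 ≤ y j) → ∑ j, p j * y j ≤ b →
    quasilinearUtility p w y ≤ quasilinearUtility p w z

lemma quasilinearUtility_zero (p w : κ → ℝ) : quasilinearUtility p w 0 = 0 := by
  simp [quasilinearUtility]

lemma sum_mul_add_ite_eq [DecidableEq κ] (f y : κ → ℝ) (k : κ) (t : ℝ) :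
    ∑ j, f j * (y j + if j = k then t else 0) = ∑ j, f j * y j + f k * t := by
  simp [mul_add, sum_add_distrib]

lemma quasilinearUtility_le_sum {p w z : κ → ℝ} (hp : ∀ j, 0 ≤ p j) (hw : ∀ j, 0 ≤ w j)
    (hz : ∀ j, 0 ≤ z j) (hz1 : ∀ j, z j ≤ 1) : quasilinearUtility p w z ≤ ∑ j, w j :=
  sum_le_sum fun j _ => calc
    (w j - p j) * z j ≤ w j * z j := by nlinarith [hp j, hz j]
    _ ≤ w j := mul_le_of_le_one_right (hw j) (hz1 j)

namespace MaximizesQuasilinearUtility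

variable [DecidableEq κ] {p w z : κ → ℝ} {b : ℝ}

lemma deviation_le (h : MaximizesQuasilinearUtility p w b z) {y : κ → ℝ} {k : κ} {t : ℝ}
    (hy : ∀ j, 0 ≤ y j + if j = k then t else 0) (hcost : ∑ j, p j * y j + p k * t ≤ b) :
    quasilinearUtility p w y + (w k - p k) * t ≤ quasilinearUtility p w z := by
  have := h (fun j => y j + if j = k then t else 0) hy (by rwa [sum_mul_add_ite_eq])
  rwa [quasilinearUtility, sum_mul_add_ite_eq] at this

lemma spend_budget_le (h : MaximizesQuasilinearUtility p w b z) (hb : 0 ≤ b) {k : κ}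
    (hpk : 0 ≤ p k) : (w k - p k) * (b / p k) ≤ quasilinearUtility p w z := by
  have hy : ∀ j, 0 ≤ (0 : κ → ℝ) j + if j = k then b / p k else 0 := fun j => by
    split_ifs <;> simp only [Pi.zero_apply, zero_add] <;> positivity
  have hcost : ∑ j, p j * (0 : κ → ℝ) j + p k * (b / p k) ≤ b := by
    rcases hpk.eq_or_lt with hpk | hpk
    · simpa [← hpk] using hb
    · simp [mul_div_cancel₀ _ hpk.ne']
  simpa [quasilinearUtility_zero] using h.deviation_le hy hcost

/-- One more unit of `k` must not help as long as it is affordable. -/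
lemma valuation_le_price (h : MaximizesQuasilinearUtility p w b z) (hz : ∀ j, 0 ≤ z j) {k : κ}
    (hcost : ∑ j, p j * z j + p k ≤ b) : w k ≤ p k := by
  have hy : ∀ j, 0 ≤ z j + if j = k then 1 else 0 := fun j => by
    split_ifs <;> linarith [hz j]
  have := h.deviation_le hy (by rwa [mul_one])
  linarith

/-- Giving up the held amount of `k` must not help. -/
lemma price_le_valuation (h : MaximizesQuasilinearUtility p w b z) (hz : ∀ j, 0 ≤ z j)
    (hcost : ∑ j, p j * z j ≤ b) {k : κ} (hpk : 0 ≤ p k) (hzk : 0 < z k) : p k ≤ w k := by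
  have hy : ∀ j, 0 ≤ z j + if j = k then -z k else 0 := fun j => by
    split_ifs with hj
    · simp [hj]
    · simpa using hz j
  have := h.deviation_le hy (by nlinarith)
  nlinarith

lemma valuation_mul_budget_le (h : MaximizesQuasilinearUtility p w b z) (hb : 0 ≤ b)
    (hp : ∀ j, 0 ≤ p j) (hw : ∀ j, 0 ≤ w j) (hz : ∀ j, 0 ≤ z j) (hz1 : ∀ j, z j ≤ 1)
    (hcost : ∑ j, p j * z j ≤ b) (k : κ) : w k * b ≤ p k * (∑ j, w j + b) := by
  rcases (hp k).eq_or_lt with hpk | hpk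
  · have hwk : w k ≤ p k := h.valuation_le_price hz (by rwa [← hpk, add_zero])
    rw [← hpk] at hwk ⊢
    nlinarith
  · have hdev := (h.spend_budget_le hb hpk.le).trans (quasilinearUtility_le_sum hp hw hz hz1)
    rw [sub_mul, mul_div_cancel₀ _ hpk.ne', ← mul_div_assoc, sub_le_iff_le_add,
      div_le_iff₀ hpk] at hdev
    linarith

end MaximizesQuasilinearUtility

end Buyer

theorem ce_price_bounds_quasilinear_general
    (n m : ℕ) (hn : 1 ≤ n) (hm : 1 ≤ m)
    (B : Fin n → ℝ) (hB : ∀ i, 0 < B i)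
    (v : Fin n → Fin m → ℝ) (hv : ∀ i j, 0 ≤ v i j)
    (p : Fin m → ℝ) (x : Fin n → Fin m → ℝ)
    (hp : ∀ j, 0 ≤ p j) (hx : ∀ i j, 0 ≤ x i j)
    (hE1 : ∀ i, ∑ j, p j * x i j ≤ B i)
    (hE2 : ∀ i, ∀ y : Fin m → ℝ, (∀ j, 0 ≤ y j) → (∑ j, p j * y j) ≤ B i →
      ∑ j, (v i j - p j) * y j ≤ ∑ j, (v i j - p j) * x i j)
    (hE3 : ∀ j, ∑ i, x i j ≤ 1) (hE3' : ∀ j, 0 < p j → ∑ i, x i j = 1) :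
    ∀ j, Finset.univ.inf' ⟨⟨0, hm⟩, Finset.mem_univ _⟩
        (fun j' => Finset.univ.sup' ⟨⟨0, hn⟩, Finset.mem_univ _⟩
          (fun i => v i j' * B i / ((∑ j'', v i j'') + B i))) ≤ p j ∧
      p j ≤ Finset.univ.sup' ⟨⟨0, hn⟩, Finset.mem_univ _⟩
        (fun i => Finset.univ.sup' ⟨⟨0, hm⟩, Finset.mem_univ _⟩ (fun j' => v i j')) := by
  have hopt : ∀ i, MaximizesQuasilinearUtility p (v i) (B i) (x i) := hE2
  have hx1 : ∀ i j, x i j ≤ 1 := fun i j =>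
    (single_le_sum (fun i' _ => hx i' j) (mem_univ i)).trans (hE3 j)
  have hle_max : ∀ i j, v i j ≤ univ.sup' ⟨⟨0, hn⟩, mem_univ _⟩
      (fun i => univ.sup' ⟨⟨0, hm⟩, mem_univ _⟩ (fun j' => v i j')) := fun i j =>
    le_sup'_of_le _ (mem_univ i) (le_sup' (v i) (mem_univ j))
  intro j
  constructor
  · obtain ⟨j₀, -, hj₀⟩ := exists_min_image univ p ⟨j, mem_univ j⟩
    refine (inf'_le_of_le _ (mem_univ j₀) (sup'_le _ _ fun i _ => ?_)).trans
      (hj₀ j (mem_univ j))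
    rw [div_le_iff₀ (by linarith [hB i, sum_nonneg fun k (_ : k ∈ univ) => hv i k])]
    exact (hopt i).valuation_mul_budget_le (hB i).le hp (hv i) (hx i) (hx1 i) (hE1 i) j₀
  · rcases (hp j).eq_or_lt with hpj | hpj
    · exact hpj ▸ (hv ⟨0, hn⟩ j).trans (hle_max _ j)
    · obtain ⟨i, -, hxij⟩ := (sum_pos_iff_of_nonneg fun i _ => hx i j).mp
        (by rw [hE3' j hpj]; exact one_pos)
      exact ((hopt i).price_le_valuation (hx i) (hE1 i) (hp j) hxij).trans (hle_max i j)

/-- bounds on competitive equilibrium prices for quasi-linear utilities. -/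
theorem ce_price_bounds_quasilinear
    (n m : ℕ) (hn : 1 ≤ n) (hm : 1 ≤ m)
    (B : Fin n → ℝ) (hB : ∀ i, 0 < B i)
    (v : Fin n → Fin m → ℝ) (hv : ∀ i j, 0 ≤ v i j)
    (hrow : ∀ i, ∃ j, v i j ≠ 0) (hcol : ∀ j, ∃ i, v i j ≠ 0)
    (p : Fin m → ℝ) (x : Fin n → Fin m → ℝ)
    (hp : ∀ j, 0 ≤ p j) (hx : ∀ i j, 0 ≤ x i j)
    (hE1 : ∀ i, ∑ j, p j * x i j ≤ B i)
    (hE2 : ∀ i, ∀ y : Fin m → ℝ, (∀ j, 0 ≤ y j) → (∑ j, p j * y j) ≤ B i →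
      ∑ j, (v i j - p j) * y j ≤ ∑ j, (v i j - p j) * x i j)
    (hE3 : ∀ j, ∑ i, x i j ≤ 1) (hE3' : ∀ j, 0 < p j → ∑ i, x i j = 1) :
    ∀ j, Finset.univ.inf' ⟨⟨0, hm⟩, Finset.mem_univ _⟩
        (fun j' => Finset.univ.sup' ⟨⟨0, hn⟩, Finset.mem_univ _⟩
          (fun i => v i j' * B i / ((∑ j'', v i j'') + B i))) ≤ p j ∧
      p j ≤ Finset.univ.sup' ⟨⟨0, hn⟩, Finset.mem_univ _⟩
        (fun i => Finset.univ.sup' ⟨⟨0, hm⟩, Finset.mem_univ _⟩ (fun j' => v i j')) :=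
  ce_price_bounds_quasilinear_general n m hn hm B hB v hv p x hp hx hE1 hE2 hE3 hE3'
end

section
/- Let μ* be a global minimizer of F over ℝ^m and let μ̲ ≤ μ̄ be reals with μ̲ ≤ μ*_j ≤ μ̄ for all j. Let δ > 0 and η > 0 satisfy 2δ·log(m+1)·‖B‖₁ ≤ exp(μ̲ − η)·η². Then any global minimizer μ̂^δ of F_δ over ℝ^m satisfies ‖μ̂^δ − μ*‖₂ ≤ η; in particular μ̲ − η ≤ μ̂^δ_j ≤ μ̄ + η for all j, so μ̂^δ is also an optimal solution of the box-constrained problem min{ F_δ(μ) : μ̲ − η ≤ μ_j ≤ μ̄ + η for all j }. -/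
open scoped Classical

section Aux

variable {n m : ℕ}

lemma my_extV_nonneg (v : Fin n → Fin m → ℝ) (hv : ∀ i j, 0 ≤ v i j) (i : Fin n)
    (j : Fin (m + 1)) : 0 ≤ extV v i j := by
  unfold extV
  induction j using Fin.cases with
  | zero => simp
  | succ j => simp [hv i j]

lemma my_valF_nonneg (v : Fin n → Fin m → ℝ) (hv : ∀ i j, 0 ≤ v i j) (μ : Fin m → ℝ)
    (i : Fin n) (j : Fin (m + 1)) : 0 ≤ valF v μ i j :=
  mul_nonneg (my_extV_nonneg v hv i j) (Real.exp_nonneg _)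

lemma my_valF_zero (v : Fin n → Fin m → ℝ) (μ : Fin m → ℝ) (i : Fin n) :
    valF v μ i 0 = 1 := by
  simp [valF, extV, extMu]

lemma my_supM_pos (v : Fin n → Fin m → ℝ) (μ : Fin m → ℝ) (i : Fin n) :
    0 < Finset.univ.sup' Finset.univ_nonempty (valF v μ i) := by
  have h := Finset.le_sup' (valF v μ i) (Finset.mem_univ 0)
  rw [my_valF_zero] at h
  linarith

lemma my_exp_strongconv (a p q s : ℝ) (hp : a ≤ p) (hq : a ≤ q) (hs0 : 0 ≤ s) (hs1 : s ≤ 1) :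
    Real.exp ((1 - s) * p + s * q) + Real.exp a * (s * (1 - s) * (q - p) ^ 2 / 2)
      ≤ (1 - s) * Real.exp p + s * Real.exp q := by
  have hg : ConvexOn ℝ (Set.Ici a) (fun x => Real.exp x - Real.exp a / 2 * x ^ 2) := by
    have hd1 : ∀ x : ℝ, HasDerivAt (fun x => Real.exp x - Real.exp a / 2 * x ^ 2)
        (Real.exp x - Real.exp a * x) x := by
      intro x
      have h := (Real.hasDerivAt_exp x).sub (((hasDerivAt_pow 2 x)).const_mul (Real.exp a / 2))
      exact h.congr_deriv (by ring)
    have hderiv : deriv (fun x => Real.exp x - Real.exp a / 2 * x ^ 2)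
        = fun x => Real.exp x - Real.exp a * x := funext fun x => (hd1 x).deriv
    have hd2 : ∀ x : ℝ, HasDerivAt (fun x => Real.exp x - Real.exp a * x)
        (Real.exp x - Real.exp a) x := by
      intro x
      have h := (Real.hasDerivAt_exp x).sub ((hasDerivAt_id x).const_mul (Real.exp a))
      exact h.congr_deriv (by ring)
    apply convexOn_of_deriv2_nonneg (convex_Ici a)
    · exact (Real.continuous_exp.sub (continuous_const.mul (continuous_pow 2))).continuousOn
    · intro x _
      exact ((hd1 x).differentiableAt).differentiableWithinAt
    · intro x _
      rw [hderiv]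
      exact ((hd2 x).differentiableAt).differentiableWithinAt
    · intro x hx
      rw [interior_Ici] at hx
      have : deriv^[2] (fun x => Real.exp x - Real.exp a / 2 * x ^ 2) x
          = Real.exp x - Real.exp a := by
        simp only [Function.iterate_succ, Function.iterate_zero, Function.comp_apply, id_eq]
        rw [hderiv, (hd2 x).deriv]
      rw [this]
      have := Real.exp_le_exp.2 (le_of_lt hx)
      linarith
  have hmem_p : p ∈ Set.Ici a := hp
  have hmem_q : q ∈ Set.Ici a := hq
  have hconv := hg.2 hmem_p hmem_q (by linarith : (0:ℝ) ≤ 1 - s) hs0 (by ring)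
  simp only [smul_eq_mul] at hconv
  nlinarith [hconv, sq_nonneg (q - p)]

lemma my_hMax_conv (v : Fin n → Fin m → ℝ) (hv : ∀ i j, 0 ≤ v i j) (i : Fin n)
    (μ ν : Fin m → ℝ) (s : ℝ) (hs0 : 0 ≤ s) (hs1 : s ≤ 1) :
    hMax v (fun j => (1 - s) * μ j + s * ν j) i ≤ (1 - s) * hMax v μ i + s * hMax v ν i := by
  rcases eq_or_lt_of_le hs0 with h0 | h0
  · have hw : (fun j => (1 - s) * μ j + s * ν j) = μ := by
      funext j; rw [← h0]; ring
    rw [hw, ← h0]; norm_num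
  rcases eq_or_lt_of_le hs1 with h1 | h1
  · have hw : (fun j => (1 - s) * μ j + s * ν j) = ν := by
      funext j; rw [h1]; ring
    rw [hw, h1]; norm_num
  have hMμ := my_supM_pos v μ i
  have hMν := my_supM_pos v ν i
  have key : Finset.univ.sup' Finset.univ_nonempty (valF v (fun j => (1 - s) * μ j + s * ν j) i)
      ≤ (Finset.univ.sup' Finset.univ_nonempty (valF v μ i)) ^ (1 - s)
        * (Finset.univ.sup' Finset.univ_nonempty (valF v ν i)) ^ s := by
    apply Finset.sup'_le
    intro j _
    have hmu : extMu (fun j => (1 - s) * μ j + s * ν j) j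
        = (1 - s) * extMu μ j + s * extMu ν j := by
      induction j using Fin.cases with
      | zero => simp [extMu]
      | succ j => simp [extMu]
    have hfac : valF v (fun j => (1 - s) * μ j + s * ν j) i j
        = (valF v μ i j) ^ (1 - s) * (valF v ν i j) ^ s := by
      unfold valF
      rw [hmu]
      rcases (my_extV_nonneg v hv i j).eq_or_lt with hc | hc
      · rw [← hc]
        simp [Real.zero_rpow (by linarith : (1:ℝ) - s ≠ 0), Real.zero_rpow (ne_of_gt h0)]
      · rw [Real.mul_rpow (le_of_lt hc) (Real.exp_nonneg _),
            Real.mul_rpow (le_of_lt hc) (Real.exp_nonneg _),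
            ← Real.exp_mul, ← Real.exp_mul]
        have hcc : extV v i j ^ (1 - s) * extV v i j ^ s = extV v i j := by
          rw [← Real.rpow_add hc]; norm_num
        rw [show extV v i j ^ (1 - s) * Real.exp (-extMu μ j * (1 - s))
              * (extV v i j ^ s * Real.exp (-extMu ν j * s))
            = (extV v i j ^ (1 - s) * extV v i j ^ s)
              * (Real.exp (-extMu μ j * (1 - s)) * Real.exp (-extMu ν j * s)) from by ring,
          hcc, ← Real.exp_add]
        congr 1
        ring
    rw [hfac]
    exact mul_le_mul
      (Real.rpow_le_rpow (my_valF_nonneg v hv μ i j) (Finset.le_sup' _ (Finset.mem_univ j))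
        (by linarith))
      (Real.rpow_le_rpow (my_valF_nonneg v hv ν i j) (Finset.le_sup' _ (Finset.mem_univ j)) hs0)
      (Real.rpow_nonneg (my_valF_nonneg v hv ν i j) _)
      (Real.rpow_nonneg (le_of_lt hMμ) _)
  unfold hMax
  calc Real.log (Finset.univ.sup' Finset.univ_nonempty
        (valF v (fun j => (1 - s) * μ j + s * ν j) i))
      ≤ Real.log ((Finset.univ.sup' Finset.univ_nonempty (valF v μ i)) ^ (1 - s)
        * (Finset.univ.sup' Finset.univ_nonempty (valF v ν i)) ^ s) :=
        Real.log_le_log (my_supM_pos v _ i) key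
    _ = (1 - s) * Real.log (Finset.univ.sup' Finset.univ_nonempty (valF v μ i))
        + s * Real.log (Finset.univ.sup' Finset.univ_nonempty (valF v ν i)) := by
        rw [Real.log_mul (ne_of_gt (Real.rpow_pos_of_pos hMμ _))
            (ne_of_gt (Real.rpow_pos_of_pos hMν _)),
          Real.log_rpow hMμ, Real.log_rpow hMν]

end Aux
section Aux2

variable {n m : ℕ}

lemma my_F_strongconv (B : Fin n → ℝ) (hB : ∀ i, 0 ≤ B i) (v : Fin n → Fin m → ℝ)
    (hv : ∀ i j, 0 ≤ v i j) (a : ℝ) (p q : Fin m → ℝ)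
    (hp : ∀ j, a ≤ p j) (hq : ∀ j, a ≤ q j) (s : ℝ) (hs0 : 0 ≤ s) (hs1 : s ≤ 1) :
    Fobj B v (fun j => (1 - s) * p j + s * q j)
      + Real.exp a * (s * (1 - s) / 2 * ∑ j, (q j - p j) ^ 2)
      ≤ (1 - s) * Fobj B v p + s * Fobj B v q := by
  have hG : (∑ j, Real.exp ((1 - s) * p j + s * q j))
      + Real.exp a * (s * (1 - s) / 2 * ∑ j, (q j - p j) ^ 2)
      ≤ (1 - s) * ∑ j, Real.exp (p j) + s * ∑ j, Real.exp (q j) := by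
    calc (∑ j, Real.exp ((1 - s) * p j + s * q j))
        + Real.exp a * (s * (1 - s) / 2 * ∑ j, (q j - p j) ^ 2)
        = ∑ j, (Real.exp ((1 - s) * p j + s * q j)
            + Real.exp a * (s * (1 - s) * (q j - p j) ^ 2 / 2)) := by
          rw [Finset.sum_add_distrib]
          congr 1
          rw [Finset.mul_sum, Finset.mul_sum]
          exact Finset.sum_congr rfl fun j _ => by ring
      _ ≤ ∑ j, ((1 - s) * Real.exp (p j) + s * Real.exp (q j)) :=
          Finset.sum_le_sum fun j _ =>
            my_exp_strongconv a (p j) (q j) s (hp j) (hq j) hs0 hs1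
      _ = (1 - s) * ∑ j, Real.exp (p j) + s * ∑ j, Real.exp (q j) := by
          rw [Finset.mul_sum, Finset.mul_sum, ← Finset.sum_add_distrib]
  have hH : (∑ i, B i * hMax v (fun j => (1 - s) * p j + s * q j) i)
      ≤ (1 - s) * ∑ i, B i * hMax v p i + s * ∑ i, B i * hMax v q i := by
    calc (∑ i, B i * hMax v (fun j => (1 - s) * p j + s * q j) i)
        ≤ ∑ i, B i * ((1 - s) * hMax v p i + s * hMax v q i) :=
          Finset.sum_le_sum fun i _ =>
            mul_le_mul_of_nonneg_left (my_hMax_conv v hv i p q s hs0 hs1) (hB i)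
      _ = (1 - s) * ∑ i, B i * hMax v p i + s * ∑ i, B i * hMax v q i := by
          rw [Finset.mul_sum, Finset.mul_sum, ← Finset.sum_add_distrib]
          exact Finset.sum_congr rfl fun i _ => by ring
  unfold Fobj
  nlinarith [hG, hH]

lemma my_F_conv (B : Fin n → ℝ) (hB : ∀ i, 0 ≤ B i) (v : Fin n → Fin m → ℝ)
    (hv : ∀ i j, 0 ≤ v i j) (p q : Fin m → ℝ) (s : ℝ) (hs0 : 0 ≤ s) (hs1 : s ≤ 1) :
    Fobj B v (fun j => (1 - s) * p j + s * q j) ≤ (1 - s) * Fobj B v p + s * Fobj B v q := by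
  have hG : (∑ j, Real.exp ((1 - s) * p j + s * q j))
      ≤ (1 - s) * ∑ j, Real.exp (p j) + s * ∑ j, Real.exp (q j) := by
    have h := Finset.sum_le_sum (fun j (_ : j ∈ Finset.univ) => by
      have hc := convexOn_exp.2 (Set.mem_univ (p j)) (Set.mem_univ (q j))
        (by linarith : (0:ℝ) ≤ 1 - s) hs0 (by ring)
      simp only [smul_eq_mul] at hc
      exact hc)
    have h3 : (∑ j, ((1 - s) * Real.exp (p j) + s * Real.exp (q j)))
        = (1 - s) * ∑ j, Real.exp (p j) + s * ∑ j, Real.exp (q j) := by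
      rw [Finset.mul_sum, Finset.mul_sum, ← Finset.sum_add_distrib]
    rw [h3] at h
    exact h
  have hH : (∑ i, B i * hMax v (fun j => (1 - s) * p j + s * q j) i)
      ≤ (1 - s) * ∑ i, B i * hMax v p i + s * ∑ i, B i * hMax v q i := by
    calc (∑ i, B i * hMax v (fun j => (1 - s) * p j + s * q j) i)
        ≤ ∑ i, B i * ((1 - s) * hMax v p i + s * hMax v q i) :=
          Finset.sum_le_sum fun i _ =>
            mul_le_mul_of_nonneg_left (my_hMax_conv v hv i p q s hs0 hs1) (hB i)
      _ = (1 - s) * ∑ i, B i * hMax v p i + s * ∑ i, B i * hMax v q i := by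
          rw [Finset.mul_sum, Finset.mul_sum, ← Finset.sum_add_distrib]
          exact Finset.sum_congr rfl fun i _ => by ring
  unfold Fobj
  nlinarith [hG, hH]

lemma my_wt_eq (v : Fin n → Fin m → ℝ) (hv : ∀ i j, 0 ≤ v i j) (δ : ℝ)
    (μ : Fin m → ℝ) (i : Fin n) (j : Fin (m + 1)) :
    wt v δ μ i j = valF v μ i j ^ (1 / δ) := by
  unfold wt valF
  rw [Real.mul_rpow (my_extV_nonneg v hv i j) (Real.exp_nonneg _), ← Real.exp_mul]
  have : -extMu μ j * (1 / δ) = -extMu μ j / δ := by ring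
  rw [this]

lemma my_Fd_bounds (B : Fin n → ℝ) (hB : ∀ i, 0 ≤ B i) (v : Fin n → Fin m → ℝ)
    (hv : ∀ i j, 0 ≤ v i j) (δ : ℝ) (hδ : 0 < δ) (μ : Fin m → ℝ) :
    Fobj B v μ ≤ Fd B v δ μ ∧
      Fd B v δ μ ≤ Fobj B v μ + δ * Real.log ((m : ℝ) + 1) * ∑ i, B i := by
  have per : ∀ i, hMax v μ i ≤ δ * Real.log (∑ j, wt v δ μ i j) ∧
      δ * Real.log (∑ j, wt v δ μ i j) ≤ hMax v μ i + δ * Real.log ((m : ℝ) + 1) := by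
    intro i
    set M := Finset.univ.sup' Finset.univ_nonempty (valF v μ i) with hM
    have hMpos := my_supM_pos v μ i
    have hsum : (∑ j, wt v δ μ i j) = ∑ j, valF v μ i j ^ (1 / δ) :=
      Finset.sum_congr rfl fun j _ => my_wt_eq v hv δ μ i j
    have hlow : M ^ (1 / δ) ≤ ∑ j, valF v μ i j ^ (1 / δ) := by
      obtain ⟨j0, _, hj0⟩ := Finset.exists_mem_eq_sup' Finset.univ_nonempty (valF v μ i)
      rw [hM, hj0]
      exact Finset.single_le_sum (fun j _ => Real.rpow_nonneg (my_valF_nonneg v hv μ i j) _)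
        (Finset.mem_univ j0)
    have hup : (∑ j, valF v μ i j ^ (1 / δ)) ≤ ((m : ℝ) + 1) * M ^ (1 / δ) := by
      have h := Finset.sum_le_card_nsmul Finset.univ (fun j => valF v μ i j ^ (1 / δ))
        (M ^ (1 / δ)) (fun j _ => Real.rpow_le_rpow (my_valF_nonneg v hv μ i j)
          (Finset.le_sup' _ (Finset.mem_univ j)) (by positivity))
      simp only [Finset.card_univ, Fintype.card_fin, nsmul_eq_mul] at h
      push_cast at h
      exact h
    have hMrpow : (0 : ℝ) < M ^ (1 / δ) := Real.rpow_pos_of_pos hMpos _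
    have hSpos : 0 < ∑ j, wt v δ μ i j := by
      rw [hsum]; exact lt_of_lt_of_le hMrpow hlow
    constructor
    · have h := Real.log_le_log hMrpow (by rw [hsum]; exact hlow :
        M ^ (1 / δ) ≤ ∑ j, wt v δ μ i j)
      rw [Real.log_rpow hMpos] at h
      have h2 := mul_le_mul_of_nonneg_left h hδ.le
      rw [show δ * (1 / δ * Real.log M) = Real.log M from by field_simp] at h2
      exact h2
    · have h := Real.log_le_log hSpos (by rw [hsum]; exact hup :
        (∑ j, wt v δ μ i j) ≤ ((m : ℝ) + 1) * M ^ (1 / δ))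
      rw [Real.log_mul (by positivity) (ne_of_gt hMrpow), Real.log_rpow hMpos] at h
      have h2 := mul_le_mul_of_nonneg_left h hδ.le
      rw [mul_add, show δ * (1 / δ * Real.log M) = Real.log M from by field_simp] at h2
      have hhm : hMax v μ i = Real.log M := rfl
      linarith [h2, hhm]
  have e1 : δ * ∑ i, B i * Real.log (∑ j, wt v δ μ i j)
      = ∑ i, B i * (δ * Real.log (∑ j, wt v δ μ i j)) := by
    rw [Finset.mul_sum]
    exact Finset.sum_congr rfl fun i _ => by ring
  constructor
  · have h := Finset.sum_le_sum fun i (_ : i ∈ Finset.univ) =>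
      mul_le_mul_of_nonneg_left (per i).1 (hB i)
    unfold Fd Fobj
    rw [e1]
    linarith
  · have h := Finset.sum_le_sum fun i (_ : i ∈ Finset.univ) =>
      mul_le_mul_of_nonneg_left (per i).2 (hB i)
    have e2 : (∑ i, B i * (hMax v μ i + δ * Real.log ((m : ℝ) + 1)))
        = (∑ i, B i * hMax v μ i) + δ * Real.log ((m : ℝ) + 1) * ∑ i, B i := by
      rw [Finset.mul_sum, ← Finset.sum_add_distrib]
      exact Finset.sum_congr rfl fun i _ => by ring
    unfold Fd Fobj
    rw [e1]
    rw [e2] at h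
    linarith

end Aux2

lemma my_abs_le_enorm2 {m : ℕ} (x : Fin m → ℝ) (j : Fin m) : |x j| ≤ enorm2 x := by
  rw [enorm2, ← Real.sqrt_sq_eq_abs]
  exact Real.sqrt_le_sqrt (Finset.single_le_sum (fun k _ => sq_nonneg (x k)) (Finset.mem_univ j))


/-- under the parameter condition, the global minimizer of `F_δ` stays
within distance `η` of the minimizer of `F`, so it lies in the relaxed box and is also
optimal for the box-constrained smoothed problem. -/
theorem fdelta_minimizer_in_box
    (n m : ℕ) (hn : 1 ≤ n) (hm : 1 ≤ m)
    (B : Fin n → ℝ) (hB : ∀ i, 0 < B i)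
    (v : Fin n → Fin m → ℝ) (hv : ∀ i j, 0 ≤ v i j)
    (μs : Fin m → ℝ) (hμs : ∀ ν : Fin m → ℝ, Fobj B v μs ≤ Fobj B v ν)
    (lo hi : ℝ) (hlohi : lo ≤ hi) (hbox : ∀ j, lo ≤ μs j ∧ μs j ≤ hi)
    (δ η : ℝ) (hδ : 0 < δ) (hη : 0 < η)
    (hcond : 2 * δ * Real.log (m + 1) * (∑ i, B i) ≤ Real.exp (lo - η) * η ^ 2)
    (μh : Fin m → ℝ) (hμh : ∀ ν : Fin m → ℝ, Fd B v δ μh ≤ Fd B v δ ν) :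
    enorm2 (fun j => μh j - μs j) ≤ η ∧
      (∀ j, lo - η ≤ μh j ∧ μh j ≤ hi + η) ∧
      ∀ ν : Fin m → ℝ, (∀ j, lo - η ≤ ν j ∧ ν j ≤ hi + η) → Fd B v δ μh ≤ Fd B v δ ν := by
  have hB0 : ∀ i, (0:ℝ) ≤ B i := fun i => (hB i).le
  have key : enorm2 (fun j => μh j - μs j) ≤ η := by
    by_contra hcon
    push_neg at hcon
    set d := enorm2 (fun j => μh j - μs j) with hdd
    clear_value d
    have hd0 : 0 < d := lt_trans hη hcon
    set t := η / d with htdef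
    clear_value t
    have ht0 : 0 < t := by rw [htdef]; exact div_pos hη hd0
    have ht1 : t < 1 := by rw [htdef]; exact (div_lt_one hd0).2 hcon
    have htd : t * d = η := by rw [htdef]; exact div_mul_cancel₀ η (ne_of_gt hd0)
    set μt := fun j => (1 - t) * μs j + t * μh j with hμt
    clear_value μt
    have habs : ∀ j, |μh j - μs j| ≤ d := by
      intro j; rw [hdd]; exact my_abs_le_enorm2 (fun k => μh k - μs k) j
    have hμt_lo : ∀ j, lo - η ≤ μt j := by
      intro j
      have h1 := (abs_le.mp (habs j)).1
      have h2 : t * (-d) ≤ t * (μh j - μs j) := mul_le_mul_of_nonneg_left h1 ht0.le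
      have h3 : μt j = μs j + t * (μh j - μs j) := by simp only [hμt]; ring
      have h4 := (hbox j).1
      have h5 : t * (-d) = -η := by rw [mul_neg, htd]
      rw [h5] at h2
      linarith
    have hS : (∑ j, (μh j - μs j) ^ 2) = d ^ 2 := by
      rw [hdd, enorm2, Real.sq_sqrt (Finset.sum_nonneg fun j _ => sq_nonneg _)]
    have hQ : (∑ j, (μt j - μs j) ^ 2) = η ^ 2 := by
      have hji : ∀ j, (μt j - μs j) ^ 2 = t ^ 2 * (μh j - μs j) ^ 2 := by
        intro j; simp only [hμt]; ring
      rw [Finset.sum_congr rfl fun j _ => hji j, ← Finset.mul_sum, hS]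
      calc t ^ 2 * d ^ 2 = (t * d) ^ 2 := by ring
        _ = η ^ 2 := by rw [htd]
    set A := Real.exp (lo - η) with hA
    clear_value A
    have hApos : 0 < A := by rw [hA]; exact Real.exp_pos _
    have hAη : 0 ≤ A * η ^ 2 := mul_nonneg hApos.le (sq_nonneg η)
    have strong : ∀ s : ℝ, 0 < s → s < 1 →
        Fobj B v μs + A * ((1 - s) / 2 * η ^ 2) ≤ Fobj B v μt := by
      intro s hs0 hs1
      have h := my_F_strongconv B hB0 v hv (lo - η) μs μt
        (fun j => by linarith [(hbox j).1]) hμt_lo s hs0.le hs1.le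
      rw [hQ, ← hA] at h
      have hmin := hμs (fun j => (1 - s) * μs j + s * μt j)
      have h2 : s * (Fobj B v μs + A * ((1 - s) / 2 * η ^ 2)) ≤ s * Fobj B v μt := by
        nlinarith [h, hmin]
      exact le_of_mul_le_mul_left h2 hs0
    have lim : Fobj B v μs + A * (η ^ 2 / 2) ≤ Fobj B v μt := by
      by_contra hc
      push_neg at hc
      set e := Fobj B v μs + A * (η ^ 2 / 2) - Fobj B v μt with he
      clear_value e
      have he0 : 0 < e := by simp only [he]; linarith
      have hD : (0:ℝ) < A * η ^ 2 + 1 := by linarith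
      set s0 := e / (A * η ^ 2 + 1) with hs0def
      clear_value s0
      have hs00 : 0 < s0 := by rw [hs0def]; exact div_pos he0 hD
      have hs01 : s0 < 1 := by
        have hF : Fobj B v μs ≤ Fobj B v μt := hμs μt
        have hee : e ≤ A * η ^ 2 / 2 := by simp only [he]; linarith
        rw [hs0def, div_lt_one hD]
        linarith
      have h := strong s0 hs00 hs01
      have h4 : e ≤ A * η ^ 2 / 2 * s0 := by simp only [he]; nlinarith [h]
      have h5 : e * (A * η ^ 2 + 1) ≤ A * η ^ 2 / 2 * e := by
        have h6 := mul_le_mul_of_nonneg_right h4 hD.le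
        calc e * (A * η ^ 2 + 1) ≤ A * η ^ 2 / 2 * s0 * (A * η ^ 2 + 1) := h6
          _ = A * η ^ 2 / 2 * e := by rw [hs0def]; field_simp
      nlinarith [h5, he0, mul_nonneg he0.le hAη]
    have conv := my_F_conv B hB0 v hv μs μh t ht0.le ht1.le
    have hmt : Fobj B v μt ≤ (1 - t) * Fobj B v μs + t * Fobj B v μh := by
      rw [hμt]; exact conv
    have hlowb := (my_Fd_bounds B hB0 v hv δ hδ μh).1
    have hupb := (my_Fd_bounds B hB0 v hv δ hδ μs).2
    have hgap : Fobj B v μh ≤ Fobj B v μs + δ * Real.log ((m : ℝ) + 1) * ∑ i, B i :=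
      le_trans hlowb (le_trans (hμh μs) hupb)
    have heps : 0 < δ * Real.log ((m : ℝ) + 1) * ∑ i, B i := by
      have hm1 : (1:ℝ) < (m : ℝ) + 1 := by
        have : (1:ℝ) ≤ (m : ℝ) := by exact_mod_cast hm
        linarith
      exact mul_pos (mul_pos hδ (Real.log_pos hm1))
        (Finset.sum_pos (fun i _ => hB i) ⟨⟨0, hn⟩, Finset.mem_univ _⟩)
    have htε : t * (δ * Real.log ((m : ℝ) + 1) * ∑ i, B i)
        < δ * Real.log ((m : ℝ) + 1) * ∑ i, B i := mul_lt_of_lt_one_left heps ht1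
    have hchain : t * (Fobj B v μh - Fobj B v μs)
        ≤ t * (δ * Real.log ((m : ℝ) + 1) * ∑ i, B i) :=
      mul_le_mul_of_nonneg_left (by linarith) ht0.le
    linarith [lim, hmt, hchain, htε, hcond]
  refine ⟨key, ?_, fun ν _ => hμh ν⟩
  intro j
  have h1 := (my_abs_le_enorm2 (fun j => μh j - μs j) j).trans key
  have h2 := abs_le.mp h1
  exact ⟨by linarith [h2.1, (hbox j).1], by linarith [h2.2, (hbox j).2]⟩
end

section
/- Let μ* be a global minimizer of F over ℝ^m. Then for every j ∈ {1,…,m} there exists i ∈ {1,…,n} with j ∈ 𝒥_i(μ*); that is, {1,…,m} ⊆ ∪_{i=1}^n 𝒥_i(μ*). -/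
open scoped Classical

/-! If good `j` were inactive for every buyer, each `h_i` would be attained at some other index
with a strict margin over index `j`. Lowering `μ_j` slightly then leaves every `h_i`
unchanged while strictly decreasing `exp μ_j`, so `μ*` would not be a minimizer. -/

open Filter Topology Function

theorem Finset.sup'_update_eq_of_lt {ι α : Type*} [DecidableEq ι] [LinearOrder α]
    {s : Finset ι} (hs : s.Nonempty) {f : ι → α} {a : ι} {b : α}
    (ha : f a < s.sup' hs f) (hb : b ≤ s.sup' hs f) :
    s.sup' hs (update f a b) = s.sup' hs f := by
  apply le_antisymm
  · refine Finset.sup'_le hs _ fun k hk => ?_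
    rcases eq_or_ne k a with rfl | hka
    · simpa using hb
    · rw [update_of_ne hka]
      exact Finset.le_sup' f hk
  · obtain ⟨k₀, hk₀, hmax⟩ := Finset.exists_mem_eq_sup' hs f
    have hk₀a : k₀ ≠ a := by
      rintro rfl
      exact ha.ne hmax.symm
    calc s.sup' hs f = update f a b k₀ := by rw [update_of_ne hk₀a, hmax]
      _ ≤ s.sup' hs (update f a b) := Finset.le_sup' _ hk₀

section FisherMarket

variable {n m : ℕ} (v : Fin n → Fin m → ℝ) (μ : Fin m → ℝ) (i : Fin n)

theorem valF_update (j : Fin m) (x : ℝ) :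
    valF v (update μ j x) i = update (valF v μ i) j.succ (extV v i j.succ * Real.exp (-x)) := by
  funext k
  have hμ : extMu (update μ j x) = update (extMu μ) j.succ x := Fin.cons_update ..
  simp only [valF, hμ]
  exact apply_update (fun k y => extV v i k * Real.exp (-y)) (extMu μ) j.succ x k

theorem valF_lt_sup'_of_notMem_activeSet {k : Fin (m + 1)} (hk : k ∉ activeSet v μ i) :
    valF v μ i k < Finset.univ.sup' Finset.univ_nonempty (valF v μ i) :=
  (Finset.le_sup' _ (Finset.mem_univ k)).lt_of_ne fun h => hk (by simp [activeSet, h])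

theorem eventually_hMax_update_eq {j : Fin m} (hj : j.succ ∉ activeSet v μ i) :
    ∀ᶠ x in 𝓝 (μ j), hMax v (update μ j x) i = hMax v μ i := by
  have hcont : Continuous fun x => extV v i j.succ * Real.exp (-x) := by fun_prop
  have hlt := valF_lt_sup'_of_notMem_activeSet v μ i hj
  have hat : extV v i j.succ * Real.exp (-μ j) = valF v μ i j.succ := by
    simp [valF, extMu]
  filter_upwards [hcont.continuousAt.eventually_lt continuousAt_const (hat ▸ hlt)] with x hx
  rw [hMax, hMax, valF_update, Finset.sup'_update_eq_of_lt _ hlt hx.le]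

theorem Fobj_update_lt (B : Fin n → ℝ) {j : Fin m} {x : ℝ} (hx : x < μ j)
    (hhMax : ∀ i, hMax v (update μ j x) i = hMax v μ i) :
    Fobj B v (update μ j x) < Fobj B v μ := by
  have hexp : ∑ k, Real.exp (update μ j x k) < ∑ k, Real.exp (μ k) := by
    refine Finset.sum_lt_sum (fun k _ => ?_) ⟨j, Finset.mem_univ j, by simpa using hx⟩
    rcases eq_or_ne k j with rfl | hkj
    · simpa using hx.le
    · simp [hkj]
  simp only [Fobj, hhMax]
  linarith

end FisherMarket

theorem goods_covered_by_active_sets_general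
    (n m : ℕ)
    (B : Fin n → ℝ)
    (v : Fin n → Fin m → ℝ)
    (μs : Fin m → ℝ) (hμs : ∀ ν : Fin m → ℝ, Fobj B v μs ≤ Fobj B v ν) :
    ∀ j : Fin m, ∃ i : Fin n, j.succ ∈ activeSet v μs i := by
  intro j
  by_contra! hinactive
  have hnear : ∀ᶠ x in 𝓝 (μs j), ∀ i, hMax v (update μs j x) i = hMax v μs i :=
    eventually_all.2 fun i => eventually_hMax_update_eq v μs i (hinactive i)
  obtain ⟨x, hhMax, hx⟩ :=
    ((hnear.filter_mono nhdsWithin_le_nhds).and (self_mem_nhdsWithin (s := Set.Iio (μs j)))).exists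
  exact (hμs _).not_gt (Fobj_update_lt v μs B hx hhMax)

/-- at a global minimizer of `F`, every good `j ∈ [m]` is active for some
buyer, i.e. `[m] ⊆ ∪_i 𝒥_i(μ*)`. -/
theorem goods_covered_by_active_sets
    (n m : ℕ) (hn : 1 ≤ n) (hm : 1 ≤ m)
    (B : Fin n → ℝ) (hB : ∀ i, 0 < B i)
    (v : Fin n → Fin m → ℝ) (hv : ∀ i j, 0 ≤ v i j)
    (μs : Fin m → ℝ) (hμs : ∀ ν : Fin m → ℝ, Fobj B v μs ≤ Fobj B v ν) :
    ∀ j : Fin m, ∃ i : Fin n, j.succ ∈ activeSet v μs i :=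
  goods_covered_by_active_sets_general n m B v μs hμs
end

section
/- Let μ* be a global minimizer of F over ℝ^m, set J*_i = 𝒥_i(μ*) for i ∈ [n], and let I_1,…,I_s ⊆ [n] be the equivalence classes of the connection relation on the family {J*_i}, with J̃_l = ∪_{i∈I_l} J*_i. Then: (a) for every class l with 0 ∉ J̃_l one has Σ_{j∈J̃_l} exp(μ*_j) = Σ_{i∈I_l} B_i; and (b) μ* is the unique vector μ ∈ ℝ^m satisfying (with the convention μ₀ = 0) log v_{ij} − μ_j = log v_{ij'} − μ_{j'} for all j, j' ∈ J*_i and all i ∈ [n], together with Σ_{j∈J̃_l} exp(μ_j) = Σ_{i∈I_l} B_i for every class l with 0 ∉ J̃_l. -/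
open scoped Classical

namespace FisherAux

open Finset Filter Real

variable {n m : ℕ}

/-- The maximum of the values `v_{ij} e^{−μ_j}` over extended indices. -/
noncomputable def supV (v : Fin n → Fin m → ℝ) (μ : Fin m → ℝ) (i : Fin n) : ℝ :=
  Finset.univ.sup' Finset.univ_nonempty (valF v μ i)

lemma valF_zero (v : Fin n → Fin m → ℝ) (μ : Fin m → ℝ) (i : Fin n) : valF v μ i 0 = 1 := by
  simp [valF, extV, extMu]

lemma one_le_supV (v : Fin n → Fin m → ℝ) (μ : Fin m → ℝ) (i : Fin n) : 1 ≤ supV v μ i := by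
  rw [← valF_zero v μ i]
  exact Finset.le_sup' _ (Finset.mem_univ _)

lemma supV_pos (v : Fin n → Fin m → ℝ) (μ : Fin m → ℝ) (i : Fin n) : 0 < supV v μ i :=
  lt_of_lt_of_le one_pos (one_le_supV v μ i)

lemma mem_activeSet {v : Fin n → Fin m → ℝ} {μ : Fin m → ℝ} {i : Fin n} {j : Fin (m+1)} :
    j ∈ activeSet v μ i ↔ valF v μ i j = supV v μ i := by
  simp [activeSet, supV]

lemma valF_le_supV (v : Fin n → Fin m → ℝ) (μ : Fin m → ℝ) (i : Fin n) (j : Fin (m+1)) :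
    valF v μ i j ≤ supV v μ i :=
  Finset.le_sup' _ (Finset.mem_univ _)

lemma activeSet_nonempty (v : Fin n → Fin m → ℝ) (μ : Fin m → ℝ) (i : Fin n) :
    (activeSet v μ i).Nonempty := by
  obtain ⟨j, -, hj⟩ := Finset.exists_mem_eq_sup' (Finset.univ_nonempty) (valF v μ i)
  exact ⟨j, mem_activeSet.mpr hj.symm⟩

lemma extMu_shift (μ χ : Fin m → ℝ) (t : ℝ) :
    extMu (μ + t • χ) = fun j => extMu μ j + t * extMu χ j := by
  funext j
  refine Fin.cases ?_ ?_ j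
  · simp [extMu]
  · intro k
    simp [extMu]

lemma valF_shift (v : Fin n → Fin m → ℝ) (μ χ : Fin m → ℝ) (t : ℝ) (i : Fin n) (j : Fin (m+1)) :
    valF v (μ + t • χ) i j = valF v μ i j * Real.exp (-(t * extMu χ j)) := by
  unfold valF
  rw [extMu_shift, neg_add, Real.exp_add]
  ring

end FisherAux
namespace FisherAux

open Finset Filter Real

variable {n m : ℕ}

lemma eventually_sup (v : Fin n → Fin m → ℝ) (μs χ : Fin m → ℝ) (i : Fin n) (c : ℝ)
    (hc : ∀ j ∈ activeSet v μs i, extMu χ j = c) :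
    ∀ᶠ t in nhds (0:ℝ), supV v (μs + t • χ) i = supV v μs i * Real.exp (-(t * c)) := by
  have hub : ∀ᶠ t in nhds (0:ℝ), ∀ j : Fin (m+1),
      valF v μs i j * Real.exp (-(t * extMu χ j)) ≤ supV v μs i * Real.exp (-(t * c)) := by
    rw [Filter.eventually_all]
    intro j
    by_cases hj : j ∈ activeSet v μs i
    · filter_upwards with t
      rw [hc j hj, mem_activeSet.mp hj]
    · have hlt : valF v μs i j < supV v μs i :=
        lt_of_le_of_ne (valF_le_supV v μs i j) (fun h => hj (mem_activeSet.mpr h))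
      have hf : Continuous fun t : ℝ => valF v μs i j * Real.exp (-(t * extMu χ j)) := by
        continuity
      have hg : Continuous fun t : ℝ => supV v μs i * Real.exp (-(t * c)) := by
        continuity
      have h0 : valF v μs i j * Real.exp (-((0:ℝ) * extMu χ j)) <
          supV v μs i * Real.exp (-((0:ℝ) * c)) := by
        simpa using hlt
      have := ContinuousAt.eventually_lt hf.continuousAt hg.continuousAt h0
      exact this.mono fun t ht => ht.le
  filter_upwards [hub] with t ht
  apply le_antisymm
  · apply Finset.sup'_le
    intro j _
    rw [valF_shift]
    exact ht j
  · obtain ⟨j0, hj0⟩ := activeSet_nonempty v μs i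
    have : supV v μs i * Real.exp (-(t * c)) = valF v (μs + t • χ) i j0 := by
      rw [valF_shift, hc j0 hj0, mem_activeSet.mp hj0]
    rw [this]
    exact valF_le_supV _ _ _ _

lemma key_grad {B : Fin n → ℝ} {v : Fin n → Fin m → ℝ} {μs : Fin m → ℝ}
    (hμs : ∀ ν : Fin m → ℝ, Fobj B v μs ≤ Fobj B v ν)
    (χ : Fin m → ℝ) (c : Fin n → ℝ)
    (hc : ∀ i, ∀ j ∈ activeSet v μs i, extMu χ j = c i) :
    ∑ j, Real.exp (μs j) * χ j = ∑ i, B i * c i := by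
  set ψ : ℝ → ℝ := fun t => (∑ j, Real.exp (μs j) * Real.exp (t * χ j)) +
      ∑ i, B i * (Real.log (supV v μs i) - t * c i) with hψ
  have heq : ∀ᶠ t in nhds (0:ℝ), Fobj B v (μs + t • χ) = ψ t := by
    have hall : ∀ᶠ t in nhds (0:ℝ), ∀ i,
        supV v (μs + t • χ) i = supV v μs i * Real.exp (-(t * c i)) := by
      rw [Filter.eventually_all]
      intro i
      exact eventually_sup v μs χ i (c i) (hc i)
    filter_upwards [hall] with t ht
    unfold Fobj hMax
    rw [hψ]
    congr 1
    · apply Finset.sum_congr rfl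
      intro j _
      rw [Pi.add_apply, Pi.smul_apply, smul_eq_mul, Real.exp_add]
    · apply Finset.sum_congr rfl
      intro i _
      have h2 : Finset.univ.sup' Finset.univ_nonempty (valF v (μs + t • χ) i) =
          supV v μs i * Real.exp (-(t * c i)) := ht i
      rw [h2, Real.log_mul (supV_pos v μs i).ne' (Real.exp_ne_zero _), Real.log_exp]
      ring
  have hψ0 : ψ 0 = Fobj B v μs := by
    have h := heq.self_of_nhds
    simpa using h.symm
  have hmin : IsLocalMin ψ 0 := by
    filter_upwards [heq] with t ht
    rw [hψ0]
    exact le_of_le_of_eq (hμs _) ht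
  have hd : HasDerivAt ψ ((∑ j, Real.exp (μs j) * χ j) + ∑ i, -(B i * c i)) 0 := by
    have h1 : HasDerivAt (fun t : ℝ => ∑ j, Real.exp (μs j) * Real.exp (t * χ j))
        (∑ j, Real.exp (μs j) * χ j) 0 := by
      have hterm : ∀ j ∈ Finset.univ, HasDerivAt
          (fun t : ℝ => Real.exp (μs j) * Real.exp (t * χ j)) (Real.exp (μs j) * χ j) (0:ℝ) := by
        intro j _
        have hlin : HasDerivAt (fun t : ℝ => t * χ j) (χ j) 0 :=
          by simpa using (hasDerivAt_id (0:ℝ)).mul_const (χ j)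
        have h := (hlin.exp).const_mul (Real.exp (μs j))
        simpa using h
      simpa using HasDerivAt.fun_sum hterm
    have h2 : HasDerivAt (fun t : ℝ => ∑ i, B i * (Real.log (supV v μs i) - t * c i))
        (∑ i, -(B i * c i)) 0 := by
      have hterm : ∀ i ∈ Finset.univ, HasDerivAt
          (fun t : ℝ => B i * (Real.log (supV v μs i) - t * c i)) (-(B i * c i)) (0:ℝ) := by
        intro i _
        have hlin : HasDerivAt (fun t : ℝ => t * c i) (c i) 0 :=
          by simpa using (hasDerivAt_id (0:ℝ)).mul_const (c i)
        have h := (hlin.const_sub (Real.log (supV v μs i))).const_mul (B i)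
        simpa [mul_comm] using h
      simpa using HasDerivAt.fun_sum hterm
    exact h1.add h2
  have hzero := hmin.hasDerivAt_eq_zero hd
  have : ∑ i, -(B i * c i) = -∑ i, B i * c i := by rw [Finset.sum_neg_distrib]
  rw [this] at hzero
  linarith [hzero]

end FisherAux
namespace FisherAux

open Finset Filter Real

variable {n m : ℕ}

lemma every_good_active {B : Fin n → ℝ} {v : Fin n → Fin m → ℝ} {μs : Fin m → ℝ}
    (hμs : ∀ ν : Fin m → ℝ, Fobj B v μs ≤ Fobj B v ν) (j : Fin m) :
    ∃ i, j.succ ∈ activeSet v μs i := by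
  by_contra h
  push_neg at h
  set χ0 : Fin m → ℝ := Pi.single j 1 with hχ0
  have hkey := key_grad hμs χ0 (fun _ => 0) ?_
  · have hL : ∑ j', Real.exp (μs j') * χ0 j' = Real.exp (μs j) := by
      rw [Finset.sum_eq_single j]
      · simp [hχ0]
      · intro b _ hb
        simp [hχ0, Pi.single_eq_of_ne hb]
      · simp
    rw [hL] at hkey
    simp at hkey
  · intro i j' hj'
    induction j' using Fin.cases with
    | zero => simp [extMu]
    | succ k =>
      simp only [extMu, Fin.cons_succ]
      rcases eq_or_ne k j with rfl | hk
      · exact absurd hj' (h i)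
      · simp [hχ0, Pi.single_eq_of_ne hk]

lemma extV_pos_of_active {v : Fin n → Fin m → ℝ} {μs : Fin m → ℝ} {i : Fin n} {j : Fin (m+1)}
    (hj : j ∈ activeSet v μs i) : 0 < extV v i j := by
  have hv : 0 < valF v μs i j := by
    rw [mem_activeSet.mp hj]
    exact supV_pos v μs i
  unfold valF at hv
  nlinarith [Real.exp_pos (-extMu μs j), hv]

lemma log_valF {v : Fin n → Fin m → ℝ} {μs : Fin m → ℝ} {i : Fin n} {j : Fin (m+1)}
    (hj : j ∈ activeSet v μs i) :
    Real.log (valF v μs i j) = Real.log (extV v i j) - extMu μs j := by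
  unfold valF
  rw [Real.log_mul (extV_pos_of_active hj).ne' (Real.exp_ne_zero _), Real.log_exp]
  ring

lemma active_eq {v : Fin n → Fin m → ℝ} {μs : Fin m → ℝ} :
    ∀ i : Fin n, ∀ j ∈ activeSet v μs i, ∀ j' ∈ activeSet v μs i,
      Real.log (extV v i j) - extMu μs j = Real.log (extV v i j') - extMu μs j' := by
  intro i j hj j' hj'
  rw [← log_valF hj, ← log_valF hj', mem_activeSet.mp hj, mem_activeSet.mp hj']

end FisherAux
namespace FisherAux

open Finset Filter Real

variable {n m : ℕ}

lemma budget_balance {B : Fin n → ℝ} {v : Fin n → Fin m → ℝ} {μs : Fin m → ℝ}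
    (hμs : ∀ ν : Fin m → ℝ, Fobj B v μs ≤ Fobj B v ν)
    {S : Finset (Fin n)} {J : Finset (Fin (m+1))}
    (hin : ∀ i ∈ S, activeSet v μs i ⊆ J)
    (hout : ∀ i ∉ S, ∀ j ∈ activeSet v μs i, j ∉ J)
    (h0 : (0 : Fin (m+1)) ∉ J) :
    ∑ j ∈ J, Real.exp (extMu μs j) = ∑ i ∈ S, B i := by
  classical
  set χ : Fin m → ℝ := fun k => if k.succ ∈ J then 1 else 0 with hχ
  set c : Fin n → ℝ := fun i => if i ∈ S then 1 else 0 with hc'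
  have hkey := key_grad hμs χ c ?_
  · have hR : ∑ i, B i * c i = ∑ i ∈ S, B i := by
      rw [hc']
      have h2 : ∀ i, B i * (if i ∈ S then (1:ℝ) else 0) = if i ∈ S then B i else 0 := by
        intro i; by_cases h : i ∈ S <;> simp [h]
      rw [Finset.sum_congr rfl (fun i _ => h2 i), Finset.sum_ite_mem, Finset.univ_inter]
    have hL : ∑ j ∈ J, Real.exp (extMu μs j) = ∑ k, Real.exp (μs k) * χ k := by
      have h1 : ∑ j ∈ J, Real.exp (extMu μs j)
          = ∑ j : Fin (m+1), if j ∈ J then Real.exp (extMu μs j) else 0 := by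
        rw [Finset.sum_ite_mem, Finset.univ_inter]
      rw [h1, Fin.sum_univ_succ, if_neg h0, zero_add]
      apply Finset.sum_congr rfl
      intro k _
      by_cases h : k.succ ∈ J <;> simp [h, hχ, extMu]
    rw [hL, ← hR, hkey]
  · intro i j hj
    rcases Fin.eq_zero_or_eq_succ j with rfl | ⟨k, rfl⟩
    · have hjJ : i ∉ S := by
        intro hiS
        exact h0 (hin i hiS hj)
      simp [extMu, hc', hjJ]
    · by_cases hiS : i ∈ S
      · have hjJ : k.succ ∈ J := hin i hiS hj
        simp [extMu, hχ, hjJ, hc', hiS]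
      · have hjJ : k.succ ∉ J := hout i hiS _ hj
        simp [extMu, hχ, hjJ, hc', hiS]

end FisherAux
/-- at the optimum, the connection classes of the active index sets
determine the optimal point: (a) the budget-balance equations hold on every class not
containing the index `0`, and (b) `μ*` is the unique solution of the resulting system
of equations. The sets `I l` are the equivalence classes of the connection relation
(the equivalence relation generated by `J*_i ∩ J*_{i'} ≠ ∅`). -/
theorem optimal_prices_from_connection_classes
    (n m : ℕ) (hn : 1 ≤ n) (hm : 1 ≤ m)
    (B : Fin n → ℝ) (hB : ∀ i, 0 < B i)
    (v : Fin n → Fin m → ℝ) (hv : ∀ i j, 0 ≤ v i j)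
    (μs : Fin m → ℝ) (hμs : ∀ ν : Fin m → ℝ, Fobj B v μs ≤ Fobj B v ν)
    (s : ℕ) (I : Fin s → Finset (Fin n))
    (hne : ∀ l, (I l).Nonempty)
    (hclass : ∀ l, ∀ i ∈ I l, ∀ i' : Fin n,
      (i' ∈ I l ↔ Relation.EqvGen
        (fun a b => ((activeSet v μs a) ∩ (activeSet v μs b)).Nonempty) i i'))
    (hcover : ∀ i : Fin n, ∃ l, i ∈ I l) :
    ((∀ l, (0 : Fin (m + 1)) ∉ (I l).biUnion (fun i => activeSet v μs i) →
        ∑ j ∈ (I l).biUnion (fun i => activeSet v μs i), Real.exp (extMu μs j) =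
          ∑ i ∈ I l, B i) ∧
      ∀ i : Fin n, ∀ j ∈ activeSet v μs i, ∀ j' ∈ activeSet v μs i,
        Real.log (extV v i j) - extMu μs j = Real.log (extV v i j') - extMu μs j') ∧
      ∀ μ : Fin m → ℝ,
        (∀ i : Fin n, ∀ j ∈ activeSet v μs i, ∀ j' ∈ activeSet v μs i,
          Real.log (extV v i j) - extMu μ j = Real.log (extV v i j') - extMu μ j') →
        (∀ l, (0 : Fin (m + 1)) ∉ (I l).biUnion (fun i => activeSet v μs i) →
          ∑ j ∈ (I l).biUnion (fun i => activeSet v μs i), Real.exp (extMu μ j) =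
            ∑ i ∈ I l, B i) →
        μ = μs := by
  classical
  have hsub : ∀ l, ∀ i ∈ I l,
      activeSet v μs i ⊆ (I l).biUnion (fun i' => activeSet v μs i') := by
    intro l i hi j hj
    exact Finset.mem_biUnion.mpr ⟨i, hi, hj⟩
  have hdisj : ∀ l, ∀ i, i ∉ I l → ∀ j ∈ activeSet v μs i,
      j ∉ (I l).biUnion (fun i' => activeSet v μs i') := by
    intro l i hi j hj hjJ
    obtain ⟨i', hi', hji'⟩ := Finset.mem_biUnion.mp hjJ
    exact hi ((hclass l i' hi' i).mpr
      (Relation.EqvGen.rel _ _ ⟨j, Finset.mem_inter.mpr ⟨hji', hj⟩⟩))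
  have parta : ∀ l, (0 : Fin (m + 1)) ∉ (I l).biUnion (fun i => activeSet v μs i) →
      ∑ j ∈ (I l).biUnion (fun i => activeSet v μs i), Real.exp (extMu μs j) =
        ∑ i ∈ I l, B i := by
    intro l h0
    exact FisherAux.budget_balance hμs (hsub l) (fun i hi => hdisj l i hi) h0
  refine ⟨⟨parta, FisherAux.active_eq⟩, ?_⟩
  intro μ hμeq hμbud
  set d : Fin (m + 1) → ℝ := fun j => extMu μ j - extMu μs j with hd
  have dsame : ∀ i : Fin n, ∀ j ∈ activeSet v μs i, ∀ j' ∈ activeSet v μs i,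
      d j = d j' := by
    intro i j hj j' hj'
    have h1 := hμeq i j hj j' hj'
    have h2 := FisherAux.active_eq i j hj j' hj'
    simp only [hd]
    linarith
  have dconst : ∀ i i', Relation.EqvGen
      (fun a b => ((activeSet v μs a) ∩ (activeSet v μs b)).Nonempty) i i' →
      ∀ j ∈ activeSet v μs i, ∀ j' ∈ activeSet v μs i', d j = d j' := by
    intro i i' h
    induction h with
    | rel a b hab =>
      obtain ⟨j0, hj0⟩ := hab
      rw [Finset.mem_inter] at hj0
      intro j hj j' hj'
      exact (dsame a j hj j0 hj0.1).trans (dsame b j0 hj0.2 j' hj')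
    | refl a => exact dsame a
    | symm a b _ ih =>
      intro j hj j' hj'
      exact (ih j' hj' j hj).symm
    | trans a b cc _ _ ih1 ih2 =>
      intro j hj j' hj'
      obtain ⟨j0, hj0⟩ := FisherAux.activeSet_nonempty v μs b
      exact (ih1 j hj j0 hj0).trans (ih2 j0 hj0 j' hj')
  funext j
  obtain ⟨i, hi⟩ := FisherAux.every_good_active hμs j
  obtain ⟨l, hl⟩ := hcover i
  have hdj : d j.succ = μ j - μs j := by simp [hd, extMu]
  by_cases h0 : (0 : Fin (m + 1)) ∈ (I l).biUnion (fun i' => activeSet v μs i')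
  · obtain ⟨i', hi', h0'⟩ := Finset.mem_biUnion.mp h0
    have hrel := (hclass l i hl i').mp hi'
    have hdd := dconst i i' hrel j.succ hi 0 h0'
    have hd0 : d 0 = 0 := by simp [hd, extMu]
    rw [hd0] at hdd
    rw [hdj] at hdd
    linarith
  · have hbudμ := hμbud l h0
    have hbudμs := parta l h0
    have hJne : j.succ ∈ (I l).biUnion (fun i' => activeSet v μs i') :=
      Finset.mem_biUnion.mpr ⟨i, hl, hi⟩
    have hconst : ∀ jj ∈ (I l).biUnion (fun i' => activeSet v μs i'), d jj = d j.succ := by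
      intro jj hjj
      obtain ⟨i2, hi2, hjj2⟩ := Finset.mem_biUnion.mp hjj
      have hrel := (hclass l i2 hi2 i).mp hl
      exact dconst i2 i hrel jj hjj2 j.succ hi
    have hsum : ∑ jj ∈ (I l).biUnion (fun i' => activeSet v μs i'), Real.exp (extMu μ jj)
        = Real.exp (d j.succ) *
          ∑ jj ∈ (I l).biUnion (fun i' => activeSet v μs i'), Real.exp (extMu μs jj) := by
      rw [Finset.mul_sum]
      apply Finset.sum_congr rfl
      intro jj hjj
      rw [← Real.exp_add]
      congr 1
      have h3 := hconst jj hjj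
      simp only [hd] at h3 ⊢
      linarith
    have hSpos : 0 < ∑ jj ∈ (I l).biUnion (fun i' => activeSet v μs i'),
        Real.exp (extMu μs jj) :=
      Finset.sum_pos (fun _ _ => Real.exp_pos _) ⟨j.succ, hJne⟩
    rw [hsum] at hbudμ
    have hexp1 : Real.exp (d j.succ) = 1 := by
      have h' : Real.exp (d j.succ) *
          (∑ jj ∈ (I l).biUnion (fun i' => activeSet v μs i'), Real.exp (extMu μs jj)) =
          1 * (∑ jj ∈ (I l).biUnion (fun i' => activeSet v μs i'), Real.exp (extMu μs jj)) := by
        rw [one_mul]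
        linarith [hbudμ, hbudμs]
      exact mul_right_cancel₀ hSpos.ne' h'
    have hzero : d j.succ = 0 := by
      have := congrArg Real.log hexp1
      simpa using this
    rw [hdj] at hzero
    linarith
end

section
/- Let μ* be a global minimizer of F over ℝ^m, and define Δ* = min_{i∈[n]} [ h_i(μ*) − max_{j∈({0,1,…,m})∖𝒥_i(μ*)} (log v_{ij} − μ*_j) ], with the convention that the inner max over the empty set is −∞. If 0 < r < Δ*/4 and μ ∈ ℝ^m satisfies ‖μ − μ*‖₂ ≤ r, then for every i ∈ [n]: 𝒥_i(μ*) = { j ∈ {0,1,…,m} : log v_{ij} − μ_j ≥ h_i(μ) − 2r }. -/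
open scoped Classical

/-!
Write `a_j = v_{ij} e^{-μ*_j}` and `b_j = v_{ij} e^{-μ_j}`. Since every coordinate of `μ - μ*`
(including the dummy coordinate `0`) is at most `r` in absolute value, `a` and `b` agree up to a
factor `c = e^r` in both directions, and so do their maxima. An active `j` then has
`b_j ≥ max b / c²`, while an inactive `j`, which by the gap condition has `a_j < max a / c⁴`,
has `b_j < max b / c²`.
-/

open Finset

theorem Finset.sup'_le_sup'_mul {ι : Type*} {s : Finset ι} (H : s.Nonempty) {f g : ι → ℝ}
    {c : ℝ} (hc : 0 ≤ c) (h : ∀ j ∈ s, f j ≤ g j * c) : s.sup' H f ≤ s.sup' H g * c :=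
  sup'_le _ _ fun j hj => (h j hj).trans (mul_le_mul_of_nonneg_right (le_sup' g hj) hc)

theorem filter_eq_sup'_eq_filter_sup'_div_sq_le {ι : Type*} [Fintype ι] [Nonempty ι]
    {a b : ι → ℝ} {c : ℝ} (hc : 0 < c) (hab : ∀ j, a j ≤ b j * c)
    (hba : ∀ j, b j ≤ a j * c)
    (hgap : ∀ j, a j ≠ univ.sup' univ_nonempty a → a j < univ.sup' univ_nonempty a / c ^ 4) :
    univ.filter (fun j => a j = univ.sup' univ_nonempty a) =
      univ.filter (fun j => univ.sup' univ_nonempty b / c ^ 2 ≤ b j) := by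
  set A := univ.sup' univ_nonempty a
  set B := univ.sup' univ_nonempty b
  have hAB : A ≤ B * c := sup'_le_sup'_mul _ hc.le fun j _ => hab j
  have hBA : B ≤ A * c := sup'_le_sup'_mul _ hc.le fun j _ => hba j
  ext j
  simp only [mem_filter, mem_univ, true_and]
  constructor
  · intro hj
    rw [div_le_iff₀ (by positivity)]
    calc B ≤ A * c := hBA
      _ = a j * c := by rw [hj]
      _ ≤ b j * c * c := mul_le_mul_of_nonneg_right (hab j) hc.le
      _ = b j * c ^ 2 := by ring
  · intro hj
    by_contra hne
    have hlt : b j < B / c ^ 2 :=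
      calc b j ≤ a j * c := hba j
        _ < A / c ^ 4 * c := mul_lt_mul_of_pos_right (hgap j hne) hc
        _ ≤ B * c / c ^ 4 * c := by gcongr
        _ = B / c ^ 2 := by field_simp
    exact hlt.not_ge hj

section FisherMarket

variable {n m : ℕ} {v : Fin n → Fin m → ℝ}

theorem valF_zero (μ : Fin m → ℝ) (i : Fin n) : valF v μ i 0 = 1 := by
  simp [valF, extV, extMu]

theorem exp_hMax (μ : Fin m → ℝ) (i : Fin n) :
    Real.exp (hMax v μ i) = univ.sup' univ_nonempty (valF v μ i) := by
  refine Real.exp_log (one_pos.trans_le ?_)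
  exact valF_zero (v := v) μ i ▸ le_sup' (valF v μ i) (mem_univ 0)

theorem exp_hMax_sub_nat_mul (μ : Fin m → ℝ) (i : Fin n) (k : ℕ) (r : ℝ) :
    Real.exp (hMax v μ i - k * r) = univ.sup' univ_nonempty (valF v μ i) / Real.exp r ^ k := by
  rw [Real.exp_sub, exp_hMax, Real.exp_nat_mul]

theorem abs_le_enorm2 (x : Fin m → ℝ) (k : Fin m) : |x k| ≤ enorm2 x := by
  rw [← Real.sqrt_sq_eq_abs]
  exact Real.sqrt_le_sqrt (single_le_sum (fun j _ => sq_nonneg (x j)) (mem_univ k))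

theorem abs_extMu_sub_le {μ ν : Fin m → ℝ} {r : ℝ} (h : enorm2 (fun j => μ j - ν j) ≤ r)
    (j : Fin (m + 1)) : |extMu μ j - extMu ν j| ≤ r := by
  cases j using Fin.cases with
  | zero => simpa [extMu] using (Real.sqrt_nonneg _).trans h
  | succ k => simpa [extMu] using (abs_le_enorm2 _ k).trans h

theorem valF_le_mul_exp (hv : ∀ i j, 0 ≤ v i j) {μ ν : Fin m → ℝ} {r : ℝ} (i : Fin n)
    {j : Fin (m + 1)} (h : |extMu μ j - extMu ν j| ≤ r) :
    valF v μ i j ≤ valF v ν i j * Real.exp r := by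
  have hV : 0 ≤ extV v i j := by
    cases j using Fin.cases with
    | zero => simp [extV]
    | succ k => simpa [extV] using hv i k
  have hexp : Real.exp (-extMu μ j) ≤ Real.exp (-extMu ν j) * Real.exp r := by
    rw [← Real.exp_add, Real.exp_le_exp]
    linarith [(abs_le.mp h).1]
  calc valF v μ i j ≤ extV v i j * (Real.exp (-extMu ν j) * Real.exp r) :=
        mul_le_mul_of_nonneg_left hexp hV
    _ = valF v ν i j * Real.exp r := by rw [valF]; ring

end FisherMarket

/-- `hgap` and the conclusion are stated with `exp` applied to both sides, so that indices with
`v_{ij} = 0` (where `log v_{ij} = −∞`) are handled correctly. -/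
theorem active_set_recovery_general
    (n m : ℕ)
    (v : Fin n → Fin m → ℝ) (hv : ∀ i j, 0 ≤ v i j)
    (μs : Fin m → ℝ)
    (r : ℝ)
    (hgap : ∀ i : Fin n, ∀ j ∉ activeSet v μs i,
      valF v μs i j < Real.exp (hMax v μs i - 4 * r))
    (μ : Fin m → ℝ) (hμ : enorm2 (fun j => μ j - μs j) ≤ r) :
    ∀ i : Fin n, activeSet v μs i =
      Finset.univ.filter (fun j => Real.exp (hMax v μ i - 2 * r) ≤ valF v μ i j) := by
  intro i
  have hclose := abs_extMu_sub_le hμ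
  have hgap' : ∀ j, valF v μs i j ≠ univ.sup' univ_nonempty (valF v μs i) →
      valF v μs i j < univ.sup' univ_nonempty (valF v μs i) / Real.exp r ^ 4 := by
    intro j hj
    have := hgap i j (by simpa [activeSet] using hj)
    rwa [← exp_hMax_sub_nat_mul, Nat.cast_ofNat]
  rw [activeSet, filter_eq_sup'_eq_filter_sup'_div_sq_le (Real.exp_pos r)
    (fun j => valF_le_mul_exp hv i (abs_sub_comm (extMu μ j) _ ▸ hclose j))
    (fun j => valF_le_mul_exp hv i (hclose j)) hgap']
  simp only [← exp_hMax_sub_nat_mul, Nat.cast_ofNat]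

/-- recovery of the active sets from a nearby point.  The hypothesis
`hgap` says `4r < Δ_i(μ*)` for every buyer `i` (in exponential form, so the convention
`log 0 = −∞` is respected and `j` with `v_{ij} = 0` are handled correctly); it encodes
`0 < r < Δ*/4`.  The conclusion identifies `𝒥_i(μ*)` with
`{j : log v_{ij} − μ_j ≥ h_i(μ) − 2r}` (again stated in exponential form). -/
theorem active_set_recovery
    (n m : ℕ) (hn : 1 ≤ n) (hm : 1 ≤ m)
    (B : Fin n → ℝ) (hB : ∀ i, 0 < B i)
    (v : Fin n → Fin m → ℝ) (hv : ∀ i j, 0 ≤ v i j)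
    (μs : Fin m → ℝ) (hμs : ∀ ν : Fin m → ℝ, Fobj B v μs ≤ Fobj B v ν)
    (r : ℝ) (hr : 0 < r)
    (hgap : ∀ i : Fin n, ∀ j ∉ activeSet v μs i,
      valF v μs i j < Real.exp (hMax v μs i - 4 * r))
    (μ : Fin m → ℝ) (hμ : enorm2 (fun j => μ j - μs j) ≤ r) :
    ∀ i : Fin n, activeSet v μs i =
      Finset.univ.filter (fun j => Real.exp (hMax v μ i - 2 * r) ≤ valF v μ i j) :=
  active_set_recovery_general n m v hv μs r hgap μ hμ
end

section
/- Let m ≥ 2 be an integer, let a_1,…,a_m be positive reals, and let γ be a real number with γ > 1 + log(m−1). Then ( Σ_{j=1}^m a_j^{γ+1} ) / ( Σ_{j=1}^m a_j^{γ} ) ≥ ( max_{j∈[m]} a_j ) · ( 1 − 1.3/(γ+1) ) / (m−1)^{1/(γ+1)}. -/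
open scoped Classical

/-- the technical ratio inequality (Lemma on power sums). -/
theorem power_sum_ratio_bound
    (m : ℕ) (hm : 2 ≤ m) (a : Fin m → ℝ) (ha : ∀ j, 0 < a j)
    (γ : ℝ) (hγ : 1 + Real.log ((m : ℝ) - 1) < γ) :
    Finset.univ.sup' ⟨⟨0, by omega⟩, Finset.mem_univ _⟩ a *
        ((1 - 1.3 / (γ + 1)) / ((m : ℝ) - 1) ^ (1 / (γ + 1))) ≤
      (∑ j, a j ^ (γ + 1)) / (∑ j, a j ^ γ) := by
  have hm2 : (2:ℝ) ≤ (m:ℝ) := by exact_mod_cast hm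
  have hm1 : (1:ℝ) ≤ (m:ℝ) - 1 := by linarith
  have hlog : (0:ℝ) ≤ Real.log ((m:ℝ) - 1) := Real.log_nonneg hm1
  have hγ1 : (1:ℝ) < γ := by linarith
  have hγ0 : (0:ℝ) < γ := by linarith
  have hB0 : (0:ℝ) < γ + 1 := by linarith
  obtain ⟨j0, -, hj0⟩ := Finset.exists_mem_eq_sup'
    (⟨⟨0, by omega⟩, Finset.mem_univ _⟩ : (Finset.univ : Finset (Fin m)).Nonempty) a
  rw [hj0]
  have hmax : ∀ j, a j ≤ a j0 := fun j => hj0 ▸ Finset.le_sup' a (Finset.mem_univ j)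
  set M := a j0 with hMdef
  have hM : 0 < M := ha j0
  set c : ℝ := 1 - 1.3 / (γ + 1) with hcdef
  have hc0 : 0 < c := by
    have h13 : 1.3 / (γ + 1) < 1 := by
      rw [div_lt_one hB0]; norm_num; linarith
    rw [hcdef]; linarith
  have hc1 : c ≤ 1 := by
    have : (0:ℝ) ≤ 1.3 / (γ+1) := by positivity
    rw [hcdef]; linarith
  set P : ℝ := ((m:ℝ) - 1) ^ (1 / (γ + 1)) with hPdef
  have hP1 : 1 ≤ P := Real.one_le_rpow hm1 (by positivity)
  have hP0 : 0 < P := lt_of_lt_of_le one_pos hP1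
  set T : ℝ := M * (c / P) with hTdef
  have hT0 : 0 < T := by positivity
  have hSγ : 0 < ∑ j, a j ^ γ :=
    Finset.sum_pos (fun j _ => Real.rpow_pos_of_pos (ha j) γ) ⟨j0, Finset.mem_univ _⟩
  rw [le_div_iff₀ hSγ, Finset.mul_sum]
  -- pointwise key lemma
  have hkey : ∀ x : ℝ, 0 < x →
      T * x ^ γ - x ^ (γ + 1) ≤ T ^ (γ+1) * ((γ/(γ+1)) ^ γ / (γ+1)) := by
    intro x hx
    have hxβ : x ^ (γ+1) = x ^ γ * x := Real.rpow_add_one (ne_of_gt hx) γ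
    have hG0 : (0:ℝ) ≤ T ^ (γ+1) * ((γ/(γ+1)) ^ γ / (γ+1)) := by positivity
    rcases le_or_gt T x with h | h
    · have hxp : (0:ℝ) < x ^ γ := Real.rpow_pos_of_pos hx γ
      nlinarith [mul_nonpos_of_nonneg_of_nonpos hxp.le (by linarith : T - x ≤ 0)]
    · have hTx : (0:ℝ) ≤ T - x := by linarith
      have hw : γ / (γ+1) + 1 / (γ+1) = 1 := by field_simp
      have hamgm := Real.geom_mean_le_arith_mean2_weighted
        (by positivity) (by positivity) hx.le (by positivity : (0:ℝ) ≤ γ * (T - x)) hw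
      have hr : γ / (γ+1) * x + 1 / (γ+1) * (γ * (T - x)) = γ * T / (γ+1) := by
        field_simp; ring
      rw [hr] at hamgm
      have hpow := Real.rpow_le_rpow (by positivity) hamgm hB0.le
      have e1 : (x ^ (γ/(γ+1))) ^ (γ+1) = x ^ γ := by
        rw [← Real.rpow_mul hx.le, div_mul_cancel₀ _ (ne_of_gt hB0)]
      have e2 : ((γ*(T-x)) ^ ((1:ℝ)/(γ+1))) ^ (γ+1) = γ * (T-x) := by
        rw [← Real.rpow_mul (by positivity), one_div_mul_cancel (ne_of_gt hB0), Real.rpow_one]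
      rw [Real.mul_rpow (by positivity) (by positivity), e1, e2] at hpow
      have hγβ : γ ^ (γ+1) = γ ^ γ * γ := Real.rpow_add_one (ne_of_gt hγ0) γ
      have hββ : (γ+1:ℝ) ^ (γ+1) = (γ+1) ^ γ * (γ+1) := Real.rpow_add_one (ne_of_gt hB0) γ
      have hdiv : (γ/(γ+1)) ^ γ = γ ^ γ / (γ+1) ^ γ := Real.div_rpow hγ0.le hB0.le γ
      have e3 : (γ * T / (γ+1)) ^ (γ+1) = γ * (T ^ (γ+1) * ((γ/(γ+1)) ^ γ / (γ+1))) := by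
        rw [Real.div_rpow (by positivity) hB0.le, Real.mul_rpow hγ0.le hT0.le, hγβ, hββ, hdiv]
        have h1 : (0:ℝ) < (γ+1) ^ γ := Real.rpow_pos_of_pos hB0 γ
        field_simp
      rw [e3] at hpow
      have hfin : γ * (T * x ^ γ - x ^ γ * x) ≤ γ * (T ^ (γ+1) * ((γ/(γ+1)) ^ γ / (γ+1))) := by
        calc γ * (T * x ^ γ - x ^ γ * x) = x ^ γ * (γ * (T - x)) := by ring
          _ ≤ γ * (T ^ (γ+1) * ((γ/(γ+1)) ^ γ / (γ+1))) := hpow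
      rw [hxβ]
      exact le_of_mul_le_mul_left hfin hγ0
  -- split off the max index
  have split1 : ∑ j, T * a j ^ γ = T * a j0 ^ γ + ∑ j ∈ Finset.univ.erase j0, T * a j ^ γ :=
    (Finset.add_sum_erase _ (fun j => T * a j ^ γ) (Finset.mem_univ j0)).symm
  have split2 : ∑ j, a j ^ (γ+1) = a j0 ^ (γ+1) + ∑ j ∈ Finset.univ.erase j0, a j ^ (γ+1) :=
    (Finset.add_sum_erase _ (fun j => a j ^ (γ+1)) (Finset.mem_univ j0)).symm
  rw [split1, split2]
  have hcard : ((Finset.univ.erase j0).card : ℝ) = (m:ℝ) - 1 := by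
    rw [Finset.card_erase_of_mem (Finset.mem_univ j0), Finset.card_univ, Fintype.card_fin,
      Nat.cast_sub (by omega), Nat.cast_one]
  have hGsum : ∑ j ∈ Finset.univ.erase j0, (T * a j ^ γ - a j ^ (γ+1))
      ≤ ((m:ℝ) - 1) * (T ^ (γ+1) * ((γ/(γ+1)) ^ γ / (γ+1))) := by
    calc ∑ j ∈ Finset.univ.erase j0, (T * a j ^ γ - a j ^ (γ+1))
        ≤ ∑ _j ∈ Finset.univ.erase j0, T ^ (γ+1) * ((γ/(γ+1)) ^ γ / (γ+1)) :=
          Finset.sum_le_sum fun j _ => hkey _ (ha j)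
      _ = ((m:ℝ) - 1) * (T ^ (γ+1) * ((γ/(γ+1)) ^ γ / (γ+1))) := by
          rw [Finset.sum_const, nsmul_eq_mul, hcard]
  have hsub : ∑ j ∈ Finset.univ.erase j0, (T * a j ^ γ - a j ^ (γ+1))
      = ∑ j ∈ Finset.univ.erase j0, T * a j ^ γ - ∑ j ∈ Finset.univ.erase j0, a j ^ (γ+1) := by
    rw [Finset.sum_sub_distrib]
  -- main numeric bound : T * M^γ + (m-1) * G ≤ M^(γ+1)
  have hMβ : M ^ (γ+1) = M ^ γ * M := Real.rpow_add_one (ne_of_gt hM) γ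
  have hTβ : T ^ (γ+1) = M ^ (γ+1) * (c ^ (γ+1) / ((m:ℝ)-1)) := by
    rw [hTdef, Real.mul_rpow hM.le (by positivity), Real.div_rpow hc0.le hP0.le]
    congr 2
    rw [hPdef, ← Real.rpow_mul (by linarith : (0:ℝ) ≤ (m:ℝ)-1),
      one_div_mul_cancel (ne_of_gt hB0), Real.rpow_one]
  have hcβ : c ^ (γ+1) ≤ 1 := Real.rpow_le_one hc0.le hc1 hB0.le
  have hqγ : (γ/(γ+1)) ^ γ ≤ 1 :=
    Real.rpow_le_one (by positivity) (by rw [div_le_one hB0]; linarith) hγ0.le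
  have hMβpos : 0 < M ^ (γ+1) := Real.rpow_pos_of_pos hM _
  have hmain : T * M ^ γ + ((m:ℝ) - 1) * (T ^ (γ+1) * ((γ/(γ+1)) ^ γ / (γ+1))) ≤ M ^ (γ+1) := by
    have h1 : T * M ^ γ = M ^ (γ+1) * (c / P) := by rw [hTdef, hMβ]; ring
    have h2 : ((m:ℝ) - 1) * (T ^ (γ+1) * ((γ/(γ+1)) ^ γ / (γ+1)))
        = M ^ (γ+1) * (c ^ (γ+1) * (γ/(γ+1)) ^ γ / (γ+1)) := by
      rw [hTβ]; field_simp
    have h3 : c / P ≤ c := div_le_self hc0.le hP1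
    have hnum : c ^ (γ+1) * (γ/(γ+1)) ^ γ ≤ 1 :=
      mul_le_one₀ hcβ (by positivity) hqγ
    have h5 : c / P + c ^ (γ+1) * (γ/(γ+1)) ^ γ / (γ+1) ≤ 1 := by
      have h4 : c ^ (γ+1) * (γ/(γ+1)) ^ γ / (γ+1) ≤ 1 / (γ+1) := by gcongr
      have h6 : (1:ℝ) / (γ+1) ≤ 1.3 / (γ+1) := by gcongr; norm_num
      have h7 : c + 1.3 / (γ+1) = 1 := by rw [hcdef]; ring
      linarith
    rw [h1, h2]
    calc M ^ (γ+1) * (c / P) + M ^ (γ+1) * (c ^ (γ+1) * (γ/(γ+1)) ^ γ / (γ+1))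
        = M ^ (γ+1) * (c / P + c ^ (γ+1) * (γ/(γ+1)) ^ γ / (γ+1)) := by ring
      _ ≤ M ^ (γ+1) * 1 := mul_le_mul_of_nonneg_left h5 hMβpos.le
      _ = M ^ (γ+1) := mul_one _
  rw [← hMdef]
  linarith [hGsum, hsub, hmain]
end

section
/- Let δ > 0, μ ∈ ℝ^m, and set p_j = exp(μ_j) for j ∈ [m]. Define x_{ij} = (B_i/p_j) · exp((log v_{ij} − μ_j)/δ) / Σ_{j'∈{0,1,…,m}} exp((log v_{ij'} − μ_{j'})/δ) for i ∈ [n], j ∈ [m] (with the conventions v_{i0} = 1, μ₀ = 0). Then: (B1) Σ_{j=1}^m p_j x_{ij} ≤ B_i for every i; and (B3) if c ∈ ℝ and ε > 0 are such that μ_j ≥ c for all j and ‖∇F_δ(μ)‖₂ ≤ exp(c)·ε, then |Σ_{i=1}^n x_{ij} − 1| ≤ ε for every j. -/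
open scoped Classical

/-- properties (B1) and (B3) of the allocation constructed from
smoothed prices `p_j = exp(μ_j)`:
`x_{ij} = (B_i/p_j) · exp((log v_{ij} − μ_j)/δ) / Σ_{j'} exp((log v_{ij'} − μ_{j'})/δ)`. -/
theorem approx_allocation_budget_and_clearance
    (n m : ℕ) (hn : 1 ≤ n) (hm : 1 ≤ m)
    (B : Fin n → ℝ) (hB : ∀ i, 0 < B i)
    (v : Fin n → Fin m → ℝ) (hv : ∀ i j, 0 ≤ v i j)
    (δ : ℝ) (hδ : 0 < δ) (μ : Fin m → ℝ)
    (x : Fin n → Fin m → ℝ)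
    (hx : ∀ i j, x i j =
      B i / Real.exp (μ j) * (wt v δ μ i j.succ / ∑ j', wt v δ μ i j')) :
    (∀ i, ∑ j, Real.exp (μ j) * x i j ≤ B i) ∧
      ∀ c ε : ℝ, 0 < ε → (∀ j, c ≤ μ j) →
        enorm2 (gradFd B v δ μ) ≤ Real.exp c * ε →
        ∀ j, |(∑ i, x i j) - 1| ≤ ε := by
  have hwt_nonneg : ∀ i j, 0 ≤ wt v δ μ i j := by
    intro i j
    unfold wt
    apply mul_nonneg
    · apply Real.rpow_nonneg
      refine Fin.cases ?_ ?_ j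
      · simp [extV]
      · intro j; simpa [extV] using hv i j
    · positivity
  have hS : ∀ i, 0 < ∑ j', wt v δ μ i j' := by
    intro i
    have h0 : wt v δ μ i 0 = 1 := by simp [wt, extV, extMu]
    calc (0:ℝ) < 1 := one_pos
      _ = wt v δ μ i 0 := h0.symm
      _ ≤ ∑ j', wt v δ μ i j' :=
        Finset.single_le_sum (fun j _ => hwt_nonneg i j) (Finset.mem_univ 0)
  have hterm : ∀ i j, Real.exp (μ j) * x i j
      = B i * (wt v δ μ i j.succ / ∑ j', wt v δ μ i j') := by
    intro i j
    rw [hx i j]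
    field_simp
  have hkey : ∀ i, ∑ j, Real.exp (μ j) * x i j
      = B i * (∑ j : Fin m, wt v δ μ i j.succ) / (∑ j', wt v δ μ i j') := by
    intro i
    simp only [hterm]
    rw [← Finset.mul_sum, ← Finset.sum_div, ← mul_div_assoc]
  constructor
  · intro i
    rw [hkey i, mul_div_assoc]
    have h1 : (∑ j : Fin m, wt v δ μ i j.succ) / (∑ j', wt v δ μ i j') ≤ 1 := by
      rw [div_le_one (hS i)]
      rw [Fin.sum_univ_succ]
      have : 0 ≤ wt v δ μ i 0 := hwt_nonneg i 0
      linarith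
    calc B i * ((∑ j : Fin m, wt v δ μ i j.succ) / (∑ j', wt v δ μ i j'))
        ≤ B i * 1 := by
          exact mul_le_mul_of_nonneg_left h1 (le_of_lt (hB i))
      _ = B i := mul_one _
  · intro c ε hε hc hnorm j
    have hgrad : gradFd B v δ μ j = Real.exp (μ j) * (1 - ∑ i, x i j) := by
      unfold gradFd
      have h' : ∀ i, B i * (wt v δ μ i j.succ / ∑ j', wt v δ μ i j')
          = Real.exp (μ j) * x i j := fun i => (hterm i j).symm
      simp only [h']
      rw [← Finset.mul_sum]
      ring
    have habs : |gradFd B v δ μ j| ≤ enorm2 (gradFd B v δ μ) := by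
      unfold enorm2
      rw [← Real.sqrt_sq_eq_abs]
      apply Real.sqrt_le_sqrt
      exact Finset.single_le_sum (f := fun k => gradFd B v δ μ k ^ 2)
        (fun k _ => sq_nonneg _) (Finset.mem_univ j)
    have h1 : Real.exp (μ j) * |(∑ i, x i j) - 1| ≤ Real.exp c * ε := by
      calc Real.exp (μ j) * |(∑ i, x i j) - 1|
          = |gradFd B v δ μ j| := by
            rw [hgrad, abs_mul, Real.abs_exp, abs_sub_comm]
        _ ≤ enorm2 (gradFd B v δ μ) := habs
        _ ≤ Real.exp c * ε := hnorm
    have h2 : Real.exp c * |(∑ i, x i j) - 1| ≤ Real.exp c * ε := by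
      calc Real.exp c * |(∑ i, x i j) - 1|
          ≤ Real.exp (μ j) * |(∑ i, x i j) - 1| :=
            mul_le_mul_of_nonneg_right (Real.exp_le_exp.mpr (hc j)) (abs_nonneg _)
        _ ≤ Real.exp c * ε := h1
    exact le_of_mul_le_mul_left h2 (Real.exp_pos c)
end

section
/- Suppose every row of v is nonzero (for each i there is j with v_{ij} > 0), let p ∈ ℝ^m with p_j > 0 for all j, let 0 < ε ≤ log(m+1)·‖B‖₁, and set δ = ε / (2·log(m+1)·‖B‖₁). Define x_{ij} = (B_i/p_j) · (v_{ij}/p_j)^{1/δ} / Σ_{j'=1}^m (v_{ij'}/p_{j'})^{1/δ} for i ∈ [n], j ∈ [m]. Then for every buyer i: Σ_{j=1}^m v_{ij} x_{ij} ≥ (1 − 2ε/‖B‖₁) · B_i · max_{j∈[m]} (v_{ij}/p_j). -/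
open scoped Classical

/-- near-optimality (B2) of the constructed allocation, linear case. -/
theorem approx_allocation_near_optimal_linear
    (n m : ℕ) (hn : 1 ≤ n) (hm : 1 ≤ m)
    (B : Fin n → ℝ) (hB : ∀ i, 0 < B i)
    (v : Fin n → Fin m → ℝ) (hv : ∀ i j, 0 ≤ v i j)
    (hrow : ∀ i, ∃ j, 0 < v i j)
    (p : Fin m → ℝ) (hp : ∀ j, 0 < p j)
    (ε : ℝ) (hε : 0 < ε) (hε' : ε ≤ Real.log (m + 1) * ∑ i, B i)
    (δ : ℝ) (hδ : δ = ε / (2 * Real.log (m + 1) * ∑ i, B i))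
    (x : Fin n → Fin m → ℝ)
    (hx : ∀ i j, x i j =
      B i / p j * ((v i j / p j) ^ (1 / δ) / ∑ j', (v i j' / p j') ^ (1 / δ))) :
    ∀ i, (1 - 2 * ε / ∑ i', B i') *
        (B i * Finset.univ.sup' ⟨⟨0, hm⟩, Finset.mem_univ _⟩ (fun j => v i j / p j)) ≤
      ∑ j, v i j * x i j := by
  intro i
  have hSpos : 0 < ∑ i', B i' :=
    Finset.sum_pos (fun i _ => hB i) ⟨⟨0, hn⟩, Finset.mem_univ _⟩
  set S : ℝ := ∑ i', B i' with hSdef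
  have hL : 0 < Real.log (m + 1) := by
    apply Real.log_pos
    have : (1 : ℝ) ≤ (m : ℝ) := by exact_mod_cast hm
    linarith
  have hδpos : 0 < δ := by rw [hδ]; positivity
  set t : ℝ := 1 / δ with htdef
  have htpos : 0 < t := by positivity
  set a : Fin m → ℝ := fun j => v i j / p j with hadef
  have ha : ∀ j, 0 ≤ a j := fun j => div_nonneg (hv i j) (hp j).le
  obtain ⟨j0, hj0⟩ := hrow i
  have haj0 : 0 < a j0 := div_pos hj0 (hp j0)
  set M : ℝ := Finset.univ.sup' ⟨⟨0, hm⟩, Finset.mem_univ _⟩ (fun j => v i j / p j) with hMdef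
  have hMa : ∀ j, a j ≤ M := fun j => Finset.le_sup' _ (Finset.mem_univ j)
  have hMpos : 0 < M := lt_of_lt_of_le haj0 (hMa j0)
  set St : ℝ := ∑ j, a j ^ t with hStdef
  have hStpos : 0 < St := by
    apply Finset.sum_pos' (fun j _ => Real.rpow_nonneg (ha j) t)
    exact ⟨j0, Finset.mem_univ _, Real.rpow_pos_of_pos haj0 t⟩
  -- rewrite the sum
  have hsum : ∑ j, v i j * x i j = B i * ((∑ j, a j ^ (t + 1)) / St) := by
    rw [Finset.sum_div, Finset.mul_sum]
    apply Finset.sum_congr rfl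
    intro j _
    rw [hx i j]
    have hrw : a j ^ (t + 1) = a j ^ t * a j := by
      rw [Real.rpow_add' (ha j) (by positivity), Real.rpow_one]
    rw [hrw]
    have hpj := (hp j).ne'
    have hvij : v i j = a j * p j := by
      simp only [hadef]; field_simp
    rw [hvij]
    rw [show (∑ j', (v i j' / p j') ^ t) = St from rfl]
    field_simp
  rw [hsum]
  -- Hölder / power-mean step
  have hq : (1 : ℝ) ≤ 1 + δ := by linarith
  have holder : St ^ ((1 : ℝ) + δ) ≤ (m : ℝ) ^ δ * ∑ j, a j ^ (t + 1) := by
    have h1 := Real.rpow_sum_le_const_mul_sum_rpow_of_nonneg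
      (s := (Finset.univ : Finset (Fin m)))
      (f := fun j => a j ^ t) hq (fun j _ => Real.rpow_nonneg (ha j) t)
    have h2 : ∀ j : Fin m, (a j ^ t) ^ ((1:ℝ) + δ) = a j ^ (t + 1) := by
      intro j
      rw [← Real.rpow_mul (ha j)]
      congr 1
      rw [htdef]
      field_simp
    simp only [h2, Finset.card_univ, Fintype.card_fin, add_sub_cancel_left] at h1
    exact h1
  -- M ≤ St ^ δ
  have hMt : M ^ t ≤ St := by
    obtain ⟨jm, _, hjm⟩ :=
      Finset.exists_mem_eq_sup' (⟨⟨0, hm⟩, Finset.mem_univ _⟩ :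
        (Finset.univ : Finset (Fin m)).Nonempty) (fun j => v i j / p j)
    have : M ^ t = a jm ^ t := by rw [hMdef, hjm]
    rw [this]
    exact Finset.single_le_sum (fun j _ => Real.rpow_nonneg (ha j) t) (Finset.mem_univ jm)
  have hMSt : M ≤ St ^ δ := by
    have h1 : (M ^ t) ^ δ ≤ St ^ δ :=
      Real.rpow_le_rpow (Real.rpow_nonneg hMpos.le t) hMt hδpos.le
    have h2 : (M ^ t) ^ δ = M := by
      rw [← Real.rpow_mul hMpos.le, htdef, one_div_mul_cancel hδpos.ne', Real.rpow_one]
    linarith [h1, h2.symm.le]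
  -- key: M * (m:ℝ)^(-δ) * St ≤ ∑ a^(t+1)
  have hmpos : (0:ℝ) < (m:ℝ) := by exact_mod_cast hm
  have key : M * (m : ℝ) ^ (-δ) * St ≤ ∑ j, a j ^ (t + 1) := by
    have h1 : St ^ ((1:ℝ) + δ) = St * St ^ δ := by
      rw [Real.rpow_add hStpos, Real.rpow_one]
    have h2 : M * St ≤ St ^ δ * St :=
      mul_le_mul_of_nonneg_right hMSt hStpos.le
    have hmd : (0:ℝ) < (m:ℝ) ^ δ := Real.rpow_pos_of_pos hmpos δ
    have h3 : M * St ≤ (m:ℝ) ^ δ * ∑ j, a j ^ (t + 1) := by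
      calc M * St ≤ St ^ δ * St := h2
        _ = St ^ ((1:ℝ) + δ) := by rw [h1]; ring
        _ ≤ (m:ℝ) ^ δ * ∑ j, a j ^ (t + 1) := holder
    have h4 : (m:ℝ) ^ (-δ) = ((m:ℝ) ^ δ)⁻¹ := by
      rw [Real.rpow_neg hmpos.le]
    rw [h4]
    calc M * ((m:ℝ)^δ)⁻¹ * St = M * St / (m:ℝ)^δ := by ring
      _ ≤ ∑ j, a j ^ (t + 1) := by
          rw [div_le_iff₀ hmd]; linarith [h3]
  -- (1 - 2ε/S) ≤ (m:ℝ)^(-δ)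
  have hfactor : 1 - 2 * ε / S ≤ (m : ℝ) ^ (-δ) := by
    have hδL : δ * Real.log (m + 1) = ε / (2 * S) := by
      rw [hδ]; field_simp
    have e1 : 1 - 2 * ε / S ≤ 1 - δ * Real.log (m + 1) := by
      rw [hδL]
      have : ε / (2 * S) ≤ 2 * ε / S := by
        rw [div_le_div_iff₀ (by positivity) hSpos]
        nlinarith
      linarith
    have e2 : 1 - δ * Real.log (m + 1) ≤ Real.exp (-(δ * Real.log (m + 1))) := by
      linarith [Real.add_one_le_exp (-(δ * Real.log (m + 1)))]
    have e3 : Real.exp (-(δ * Real.log (m + 1))) ≤ Real.exp (-(δ * Real.log m)) := by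
      apply Real.exp_le_exp.mpr
      have : Real.log m ≤ Real.log (m + 1) :=
        Real.log_le_log hmpos (by linarith)
      nlinarith
    have e4 : Real.exp (-(δ * Real.log m)) = (m : ℝ) ^ (-δ) := by
      rw [Real.rpow_def_of_pos hmpos]
      congr 1
      ring
    linarith [e1, e2, e3, e4.le, e4.ge]
  -- conclude
  have final : (1 - 2 * ε / S) * M * St ≤ ∑ j, a j ^ (t + 1) := by
    calc (1 - 2 * ε / S) * M * St ≤ (m:ℝ)^(-δ) * M * St := by
          apply mul_le_mul_of_nonneg_right _ hStpos.le
          exact mul_le_mul_of_nonneg_right hfactor hMpos.le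
      _ = M * (m:ℝ)^(-δ) * St := by ring
      _ ≤ ∑ j, a j ^ (t + 1) := key
  have hBi := hB i
  calc (1 - 2 * ε / S) * (B i * M)
      = B i * ((1 - 2 * ε / S) * M * St / St) := by
        field_simp
    _ ≤ B i * ((∑ j, a j ^ (t + 1)) / St) := by
        apply mul_le_mul_of_nonneg_left _ hBi.le
        gcongr
end
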